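/- arXiv:2009.11715 — 5 statements merged into one kernel-verified Lean document; each statement's English description precedes it below -/
import Mathlib

section
/- Let M be a k×k real matrix with all entries strictly positive. Then M has a positive real eigenvalue λ such that every other complex eigenvalue μ of M satisfies |μ| < λ. -/
/-
The Perron root is given by the Collatz–Wielandt formula: `r` is the largest `t` such that
`t • x ≤ M x` for some `x` in the standard simplex, a maximum that exists by compactness.
For a positive matrix every nonnegative `a ≠ 0` with `r • a ≤ M a` is an eigenvector:
otherwise `b = M a` satisfies `r • b < M b` in every coordinate, so a slightly larger `t`
would still work for `b`. If `M y = μ y` over `ℂ`, the triangle inequality gives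
`‖μ‖ • |y| ≤ M |y|`, hence `‖μ‖ ≤ r`. When `‖μ‖ = r`, `|y|` is an eigenvector, so the
triangle inequality is an equality; this forces `y` to be `|y|` up to a single phase,
and then `μ = r`.
-/

open Finset

theorem Complex.exists_norm_eq_one_mul_eq_norm_of_norm_sum_eq {ι : Type*} {s : Finset ι}
    {z : ι → ℂ} (h : ‖∑ j ∈ s, z j‖ = ∑ j ∈ s, ‖z j‖) :
    ∃ u : ℂ, ‖u‖ = 1 ∧ ∀ j ∈ s, u * z j = ‖z j‖ := by
  set S := ∑ j ∈ s, z j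
  set u := Complex.exp (↑(-S.arg) * Complex.I)
  have hu : ‖u‖ = 1 := Complex.norm_exp_ofReal_mul_I _
  have huS : u * S = ‖S‖ := by
    calc u * S = u * (‖S‖ * Complex.exp (S.arg * Complex.I)) := by
          rw [Complex.norm_mul_exp_arg_mul_I]
      _ = ‖S‖ := by rw [mul_left_comm, ← Complex.exp_add]; simp
  have hre : ∀ j ∈ s, (u * z j).re ≤ ‖z j‖ := fun j _ =>
    (Complex.re_le_norm _).trans_eq (by rw [norm_mul, hu, one_mul])
  have hsum : ∑ j ∈ s, (u * z j).re = ∑ j ∈ s, ‖z j‖ := by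
    rw [← Complex.re_sum, ← mul_sum, huS, Complex.ofReal_re, h]
  refine ⟨u, hu, fun j hj => ?_⟩
  have hj : (u * z j).re = ‖u * z j‖ := by
    rw [(sum_eq_sum_iff_of_le hre).1 hsum j hj, norm_mul, hu, one_mul]
  rw [← Complex.norm_of_nonneg' (Complex.re_eq_norm.1 hj), norm_mul, hu, one_mul]

theorem exists_gt_smul_le_of_forall_mul_lt {ι : Type*} [Finite ι] {c : ℝ} {b d : ι → ℝ}
    (h : ∀ i, c * b i < d i) : ∃ t > c, t • b ≤ d := by
  have hev : ∀ᶠ t in nhds c, ∀ i, t * b i < d i :=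
    Filter.eventually_all.2 fun i =>
      (continuous_id.mul continuous_const).continuousAt.eventually_lt continuousAt_const (h i)
  obtain ⟨t, hlt, ht⟩ := (eventually_mem_nhdsWithin.and
    (hev.filter_mono nhdsWithin_le_nhds) : ∀ᶠ t in nhdsWithin c (Set.Ioi c), _).exists
  exact ⟨t, hlt, fun i => (ht i).le⟩

namespace Matrix

variable {ι : Type*} [Fintype ι]

theorem mem_spectrum_iff_exists_mulVec_eq_smul {K : Type*} [Field K] [DecidableEq ι]
    (A : Matrix ι ι K) (μ : K) : μ ∈ spectrum K A ↔ ∃ v ≠ 0, A *ᵥ v = μ • v := by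
  rw [← spectrum_toLin', ← Module.End.hasEigenvalue_iff_mem_spectrum,
    Module.End.hasEigenvalue_iff, Submodule.ne_bot_iff]
  simp [and_comm]

theorem map_ofReal_mulVec_ofReal (M : Matrix ι ι ℝ) (v : ι → ℝ) :
    M.map Complex.ofReal *ᵥ (fun j => (v j : ℂ)) = fun i => ((M *ᵥ v) i : ℂ) :=
  funext fun i => (RingHom.map_mulVec Complex.ofRealHom M v i).symm

def collatzWielandtSet (M : Matrix ι ι ℝ) : Set (ℝ × (ι → ℝ)) :=
  {p | 0 ≤ p.1 ∧ p.2 ∈ stdSimplex ℝ ι ∧ p.1 • p.2 ≤ M *ᵥ p.2}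

noncomputable def collatzWielandtSup (M : Matrix ι ι ℝ) : ℝ :=
  sSup (Prod.fst '' M.collatzWielandtSet)

theorem collatzWielandtSup_nonneg (M : Matrix ι ι ℝ) : 0 ≤ M.collatzWielandtSup :=
  Real.sSup_nonneg fun _ ⟨_, hp, hfst⟩ => hfst ▸ hp.1

theorem fst_le_of_mem_collatzWielandtSet {M : Matrix ι ι ℝ} (hM : ∀ i j, 0 ≤ M i j)
    {p : ℝ × (ι → ℝ)} (hp : p ∈ M.collatzWielandtSet) : p.1 ≤ ∑ i, ∑ j, M i j := by
  obtain ⟨-, hx, hle⟩ := hp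
  calc p.1 = ∑ i, p.1 * p.2 i := by rw [← mul_sum, hx.2, mul_one]
    _ ≤ ∑ i, ∑ j, M i j * p.2 j := sum_le_sum fun i _ => hle i
    _ ≤ ∑ i, ∑ j, M i j := sum_le_sum fun i _ => sum_le_sum fun j _ =>
        mul_le_of_le_one_right (hM i j) (mem_Icc_of_mem_stdSimplex hx j).2

theorem isCompact_collatzWielandtSet {M : Matrix ι ι ℝ} (hM : ∀ i j, 0 ≤ M i j) :
    IsCompact M.collatzWielandtSet := by
  have hclosed : IsClosed M.collatzWielandtSet :=
    (isClosed_le continuous_const continuous_fst).inter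
      (((isClosed_stdSimplex ℝ ι).preimage continuous_snd).inter
        (isClosed_le (continuous_fst.smul continuous_snd)
          (continuous_const.matrix_mulVec continuous_snd)))
  exact (isCompact_Icc.prod (isCompact_stdSimplex ℝ ι)).of_isClosed_subset hclosed
    fun p hp => ⟨⟨hp.1, fst_le_of_mem_collatzWielandtSet hM hp⟩, hp.2.1⟩

theorem le_collatzWielandtSup {M : Matrix ι ι ℝ} (hM : ∀ i j, 0 ≤ M i j) {t : ℝ} {a : ι → ℝ}
    (ht : 0 ≤ t) (ha : 0 ≤ a) (ha0 : a ≠ 0) (hle : t • a ≤ M *ᵥ a) :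
    t ≤ M.collatzWielandtSup := by
  have hs : 0 < ∑ i, a i := by
    obtain ⟨j, hj⟩ := Function.ne_iff.mp ha0
    exact sum_pos' (fun i _ => ha i) ⟨j, mem_univ j, (ha j).lt_of_ne' hj⟩
  refine le_csSup ((isCompact_collatzWielandtSet hM).image continuous_fst).bddAbove
    ⟨(t, (∑ i, a i)⁻¹ • a), ⟨ht, ⟨fun i => ?_, ?_⟩, ?_⟩, rfl⟩
  · exact mul_nonneg (inv_nonneg.2 hs.le) (ha i)
  · simp [← mul_sum, hs.ne']
  · rw [mulVec_smul, smul_comm]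
    exact smul_le_smul_of_nonneg_left hle (inv_nonneg.2 hs.le)

theorem exists_mem_stdSimplex_collatzWielandtSup_smul_le [Nonempty ι] {M : Matrix ι ι ℝ}
    (hM : ∀ i j, 0 ≤ M i j) :
    ∃ x ∈ stdSimplex ℝ ι, M.collatzWielandtSup • x ≤ M *ᵥ x := by
  classical
  obtain ⟨j⟩ := ‹Nonempty ι›
  have hne : (Prod.fst '' M.collatzWielandtSet).Nonempty :=
    ⟨0, (0, Pi.single j 1),
      ⟨le_rfl, single_mem_stdSimplex ℝ j, fun i => by simpa using hM i j⟩, rfl⟩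
  obtain ⟨p, hp, hfst⟩ := ((isCompact_collatzWielandtSet hM).image continuous_fst).sSup_mem hne
  refine ⟨p.2, hp.2.1, ?_⟩
  rw [collatzWielandtSup, ← hfst]
  exact hp.2.2

theorem norm_smul_norm_le_mulVec_norm {M : Matrix ι ι ℝ} (hM : ∀ i j, 0 ≤ M i j) {μ : ℂ}
    {y : ι → ℂ} (hy : M.map Complex.ofReal *ᵥ y = μ • y) :
    ‖μ‖ • (fun j => ‖y j‖) ≤ M *ᵥ fun j => ‖y j‖ := fun i =>
  calc ‖μ‖ * ‖y i‖ = ‖∑ j, (M i j : ℂ) * y j‖ := by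
        rw [← norm_mul, ← smul_eq_mul, ← Pi.smul_apply, ← hy]; rfl
    _ ≤ ∑ j, M i j * ‖y j‖ := (norm_sum_le _ _).trans_eq
        (sum_congr rfl fun j _ => by simp [abs_of_nonneg (hM i j)])

theorem norm_le_collatzWielandtSup {M : Matrix ι ι ℝ} (hM : ∀ i j, 0 ≤ M i j) {μ : ℂ}
    {y : ι → ℂ} (hy0 : y ≠ 0) (hy : M.map Complex.ofReal *ᵥ y = μ • y) :
    ‖μ‖ ≤ M.collatzWielandtSup :=
  le_collatzWielandtSup hM (norm_nonneg μ) (fun j => norm_nonneg (y j))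
    (fun h => hy0 (funext fun j => norm_eq_zero.1 (congrFun h j)))
    (norm_smul_norm_le_mulVec_norm hM hy)

section Positive

variable {M : Matrix ι ι ℝ} (hM : ∀ i j, 0 < M i j)
include hM

theorem mulVec_pos_of_nonneg_of_ne_zero {a : ι → ℝ} (ha : 0 ≤ a) (ha0 : a ≠ 0) (i : ι) :
    0 < (M *ᵥ a) i := by
  obtain ⟨j, hj⟩ := Function.ne_iff.mp ha0
  exact Finset.sum_pos' (fun j _ => mul_nonneg (hM i j).le (ha j))
    ⟨j, mem_univ j, mul_pos (hM i j) ((ha j).lt_of_ne' hj)⟩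

theorem collatzWielandtSup_pos [Nonempty ι] : 0 < M.collatzWielandtSup := by
  classical
  obtain ⟨j⟩ := ‹Nonempty ι›
  refine (hM j j).trans_le (le_collatzWielandtSup (fun i j => (hM i j).le) (hM j j).le
    (a := Pi.single j 1) (Pi.single_nonneg.2 zero_le_one) (by simp) fun i => ?_)
  rcases eq_or_ne i j with rfl | hij
  · simp
  · simpa [hij] using (hM i j).le

theorem mulVec_eq_collatzWielandtSup_smul_of_le {a : ι → ℝ} (ha : 0 ≤ a) (ha0 : a ≠ 0)
    (hle : M.collatzWielandtSup • a ≤ M *ᵥ a) : M *ᵥ a = M.collatzWielandtSup • a := by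
  set r := M.collatzWielandtSup
  obtain ⟨i₀, -⟩ := Function.ne_iff.mp ha0
  by_contra hne
  have hMa : ∀ i, 0 < (M *ᵥ a) i := mulVec_pos_of_nonneg_of_ne_zero hM ha ha0
  have hlt : ∀ i, r * (M *ᵥ a) i < (M *ᵥ M *ᵥ a) i := by
    intro i
    have := mulVec_pos_of_nonneg_of_ne_zero hM (sub_nonneg.2 hle) (sub_ne_zero.2 hne) i
    simpa [mulVec_sub, mulVec_smul] using this
  obtain ⟨t, hrt, ht⟩ := exists_gt_smul_le_of_forall_mul_lt hlt
  exact (le_collatzWielandtSup (fun i j => (hM i j).le)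
    ((collatzWielandtSup_nonneg M).trans hrt.le) (fun i => (hMa i).le)
    (fun h => (hMa i₀).ne' (congrFun h i₀)) ht).not_gt hrt

theorem ofReal_collatzWielandtSup_mem_spectrum [Nonempty ι] [DecidableEq ι] :
    (M.collatzWielandtSup : ℂ) ∈ spectrum ℂ (M.map Complex.ofReal) := by
  obtain ⟨x, hx, hle⟩ := exists_mem_stdSimplex_collatzWielandtSup_smul_le fun i j => (hM i j).le
  have hx0 : x ≠ 0 := fun h => by simpa [h] using hx.2
  have hMx := mulVec_eq_collatzWielandtSup_smul_of_le hM hx.1 hx0 hle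
  refine (mem_spectrum_iff_exists_mulVec_eq_smul _ _).2
    ⟨fun j => (x j : ℂ), fun h => hx0 (funext fun j => by simpa using congrFun h j), ?_⟩
  rw [map_ofReal_mulVec_ofReal, hMx]
  ext j
  simp

theorem eq_collatzWielandtSup_of_norm_eq {μ : ℂ} {y : ι → ℂ} (hy0 : y ≠ 0)
    (hy : M.map Complex.ofReal *ᵥ y = μ • y) (h : ‖μ‖ = M.collatzWielandtSup) :
    μ = M.collatzWielandtSup := by
  set a : ι → ℝ := fun j => ‖y j‖
  have ha0 : a ≠ 0 := fun h0 => hy0 (funext fun j => norm_eq_zero.1 (congrFun h0 j))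
  have hMa : M *ᵥ a = M.collatzWielandtSup • a := mulVec_eq_collatzWielandtSup_smul_of_le hM
    (fun j => norm_nonneg (y j)) ha0 (by
      rw [← h]; exact norm_smul_norm_le_mulVec_norm (fun i j => (hM i j).le) hy)
  obtain ⟨i, -⟩ := Function.ne_iff.mp hy0
  have hnorm : ∀ j, ‖(M i j : ℂ) * y j‖ = M i j * a j := fun j => by
    simp [a, abs_of_pos (hM i j)]
  have htri : ‖∑ j, (M i j : ℂ) * y j‖ = ∑ j, ‖(M i j : ℂ) * y j‖ :=
    calc ‖∑ j, (M i j : ℂ) * y j‖ = ‖μ‖ * a i := by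
          rw [← norm_mul, ← smul_eq_mul, ← Pi.smul_apply, ← hy]; rfl
      _ = (M *ᵥ a) i := by rw [hMa, h]; rfl
      _ = ∑ j, ‖(M i j : ℂ) * y j‖ := by simp only [hnorm]; rfl
  obtain ⟨u, hu, huy⟩ := Complex.exists_norm_eq_one_mul_eq_norm_of_norm_sum_eq htri
  have hua : u • y = fun j => (a j : ℂ) := funext fun j =>
    mul_left_cancel₀ (Complex.ofReal_ne_zero.2 (hM i j).ne') <| by
      rw [Pi.smul_apply, smul_eq_mul, mul_left_comm, huy j (mem_univ j), hnorm]; push_cast; rfl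
  have hua0 : u • y ≠ 0 := smul_ne_zero (norm_ne_zero_iff.1 (hu ▸ one_ne_zero)) hy0
  refine smul_left_injective ℂ hua0 ?_
  calc μ • u • y = M.map Complex.ofReal *ᵥ (u • y) := by rw [mulVec_smul, hy, smul_comm]
    _ = (M.collatzWielandtSup : ℂ) • u • y := by
      rw [hua, map_ofReal_mulVec_ofReal, hMa]
      ext j
      simp

end Positive

end Matrix

/-- Perron-Frobenius: a positive real square matrix has a positive real eigenvalue
strictly dominating all other complex eigenvalues in absolute value. -/
theorem perron_frobenius_dominant_eigenvalue
    {k : ℕ} (hk : 0 < k) (M : Matrix (Fin k) (Fin k) ℝ)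
    (hM : ∀ i j, 0 < M i j) :
    ∃ lam : ℝ, 0 < lam ∧ (lam : ℂ) ∈ spectrum ℂ (M.map Complex.ofReal) ∧
      ∀ μ ∈ spectrum ℂ (M.map Complex.ofReal), μ ≠ (lam : ℂ) →
        ‖μ‖ < lam := by
  have : Nonempty (Fin k) := Fin.pos_iff_nonempty.mp hk
  refine ⟨M.collatzWielandtSup, Matrix.collatzWielandtSup_pos hM,
    Matrix.ofReal_collatzWielandtSup_mem_spectrum hM, fun μ hμ hne => ?_⟩
  obtain ⟨y, hy0, hy⟩ := (Matrix.mem_spectrum_iff_exists_mulVec_eq_smul _ μ).1 hμ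
  exact (Matrix.norm_le_collatzWielandtSup (fun i j => (hM i j).le) hy0 hy).lt_of_ne
    fun h => hne (Matrix.eq_collatzWielandtSup_of_norm_eq hM hy0 hy h)
end

section
/- Let N be a square nonnegative real matrix that is idempotent (N² = N) and such that no row and no column of N is identically zero, written in block upper-triangular form with square diagonal blocks. If all diagonal blocks have strictly positive entries, then all off-diagonal blocks of N are zero. -/
/-- A nonnegative idempotent block upper-triangular real matrix with no zero row or
column and strictly positive diagonal blocks has all off-diagonal blocks zero. -/
theorem idempotent_block_triangular_offdiag_zero
    {k : ℕ} (d : Fin k → ℕ)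
    (N : Matrix ((i : Fin k) × Fin (d i)) ((i : Fin k) × Fin (d i)) ℝ)
    (hnn : ∀ p q, 0 ≤ N p q)
    (hidem : N * N = N)
    (htri : ∀ p q, q.1 < p.1 → N p q = 0)
    (hdiag : ∀ (i : Fin k) (a b : Fin (d i)), 0 < N ⟨i, a⟩ ⟨i, b⟩)
    (hrow : ∀ p, ∃ q, N p q ≠ 0)
    (hcol : ∀ q, ∃ p, N p q ≠ 0) :
    ∀ p q, p.1 ≠ q.1 → N p q = 0 := by
  -- expand idempotence entrywise over the sigma type
  have hexp : ∀ p q, ∑ r1 : Fin k, ∑ r2 : Fin (d r1),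
      N p ⟨r1, r2⟩ * N ⟨r1, r2⟩ q = N p q := by
    intro p q
    conv_rhs => rw [← hidem]
    rw [Matrix.mul_apply, ← Finset.univ_sigma_univ, Finset.sum_sigma]
  rintro ⟨i, p2⟩ ⟨j, q2⟩ hne
  rcases lt_or_gt_of_ne hne with hij | hij
  swap
  · exact htri _ _ hij
  -- block matrices
  set A : Matrix (Fin (d i)) (Fin (d i)) ℝ := fun a b => N ⟨i, a⟩ ⟨i, b⟩ with hAdef
  set B : Matrix (Fin (d i)) (Fin (d j)) ℝ := fun a b => N ⟨i, a⟩ ⟨j, b⟩ with hBdef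
  set D : Matrix (Fin (d j)) (Fin (d j)) ℝ := fun a b => N ⟨j, a⟩ ⟨j, b⟩ with hDdef
  have hAnn : ∀ a b, 0 ≤ A a b := fun a b => hnn _ _
  have hBnn : ∀ a b, 0 ≤ B a b := fun a b => hnn _ _
  have hDnn : ∀ a b, 0 ≤ D a b := fun a b => hnn _ _
  -- A is idempotent
  have hAA : A * A = A := by
    ext a b
    rw [Matrix.mul_apply]
    have := hexp ⟨i, a⟩ ⟨i, b⟩
    rw [Finset.sum_eq_single i] at this
    · exact this
    · intro r1 _ hr1
      rcases lt_or_gt_of_ne hr1 with h | h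
      · exact Finset.sum_eq_zero fun r2 _ => by
          rw [htri ⟨i, a⟩ ⟨r1, r2⟩ h, zero_mul]
      · exact Finset.sum_eq_zero fun r2 _ => by
          rw [htri ⟨r1, r2⟩ ⟨i, b⟩ h, mul_zero]
    · intro h; exact absurd (Finset.mem_univ i) h
  have hDD : D * D = D := by
    ext a b
    rw [Matrix.mul_apply]
    have := hexp ⟨j, a⟩ ⟨j, b⟩
    rw [Finset.sum_eq_single j] at this
    · exact this
    · intro r1 _ hr1
      rcases lt_or_gt_of_ne hr1 with h | h
      · exact Finset.sum_eq_zero fun r2 _ => by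
          rw [htri ⟨j, a⟩ ⟨r1, r2⟩ h, zero_mul]
      · exact Finset.sum_eq_zero fun r2 _ => by
          rw [htri ⟨r1, r2⟩ ⟨j, b⟩ h, mul_zero]
    · intro h; exact absurd (Finset.mem_univ j) h
  -- B dominates A*B + B*D entrywise
  have hdom : ∀ a b, (A * B + B * D) a b ≤ B a b := by
    intro a b
    have h1 : ∀ r1 : Fin k, 0 ≤ ∑ r2 : Fin (d r1),
        N ⟨i, a⟩ ⟨r1, r2⟩ * N ⟨r1, r2⟩ ⟨j, b⟩ :=
      fun r1 => Finset.sum_nonneg fun r2 _ => mul_nonneg (hnn _ _) (hnn _ _)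
    have hsub : ({i, j} : Finset (Fin k)) ⊆ Finset.univ := Finset.subset_univ _
    have hle : ∑ r1 ∈ ({i, j} : Finset (Fin k)), (∑ r2 : Fin (d r1),
          N ⟨i, a⟩ ⟨r1, r2⟩ * N ⟨r1, r2⟩ ⟨j, b⟩)
        ≤ ∑ r1 : Fin k, ∑ r2 : Fin (d r1),
          N ⟨i, a⟩ ⟨r1, r2⟩ * N ⟨r1, r2⟩ ⟨j, b⟩ :=
      Finset.sum_le_sum_of_subset_of_nonneg hsub fun r1 _ _ => h1 r1
    rw [Finset.sum_pair (ne_of_lt hij)] at hle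
    rw [hexp ⟨i, a⟩ ⟨j, b⟩] at hle
    simpa [Matrix.add_apply, Matrix.mul_apply] using hle
  -- hence A*B*D ≤ A*(A*B+B*D)*D = 2 • (A*B*D) entrywise
  have key : ∀ a b, (A * B * D) a b = 0 := by
    intro a b
    have hABDnn : 0 ≤ (A * B * D) a b := by
      rw [Matrix.mul_apply]
      refine Finset.sum_nonneg fun c _ => mul_nonneg ?_ (hDnn _ _)
      rw [Matrix.mul_apply]
      exact Finset.sum_nonneg fun e _ => mul_nonneg (hAnn _ _) (hBnn _ _)
    have hmono : (A * (A * B + B * D) * D) a b ≤ (A * B * D) a b := by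
      rw [Matrix.mul_apply, Matrix.mul_apply]
      refine Finset.sum_le_sum fun c _ => mul_le_mul_of_nonneg_right ?_ (hDnn _ _)
      rw [Matrix.mul_apply, Matrix.mul_apply]
      exact Finset.sum_le_sum fun e _ =>
        mul_le_mul_of_nonneg_left (hdom e c) (hAnn a e)
    have hexpand : A * (A * B + B * D) * D = A * B * D + A * B * D := by
      rw [Matrix.mul_add, Matrix.add_mul, ← Matrix.mul_assoc A A B, hAA,
        Matrix.mul_assoc A (B * D) D, Matrix.mul_assoc B D D, hDD,
        ← Matrix.mul_assoc A B D]
    rw [hexpand] at hmono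
    simp only [Matrix.add_apply] at hmono
    linarith
  -- extract the entry
  have h0 := key p2 q2
  rw [Matrix.mul_apply] at h0
  have hterm : ∀ c ∈ Finset.univ, 0 ≤ (A * B) p2 c * D c q2 := by
    intro c _
    refine mul_nonneg ?_ (hDnn _ _)
    rw [Matrix.mul_apply]
    exact Finset.sum_nonneg fun e _ => mul_nonneg (hAnn _ _) (hBnn _ _)
  have h1 : (A * B) p2 q2 * D q2 q2 = 0 :=
    (Finset.sum_eq_zero_iff_of_nonneg hterm).mp h0 q2 (Finset.mem_univ _)
  have hD0 : 0 < D q2 q2 := hdiag j q2 q2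
  have h2 : (A * B) p2 q2 = 0 := by
    rcases mul_eq_zero.mp h1 with h | h
    · exact h
    · exact absurd h (ne_of_gt hD0)
  rw [Matrix.mul_apply] at h2
  have h3 : A p2 p2 * B p2 q2 = 0 :=
    (Finset.sum_eq_zero_iff_of_nonneg fun e _ =>
      mul_nonneg (hAnn _ _) (hBnn _ _)).mp h2 p2 (Finset.mem_univ _)
  have hA0 : 0 < A p2 p2 := hdiag i p2 p2
  rcases mul_eq_zero.mp h3 with h | h
  · exact absurd h (ne_of_gt hA0)
  · exact h
end

section
/- Let λ > μ be adjacent partitions of n in the dominance order (λ covers μ). Then μ is obtained from λ by moving a single box: there exist indices i < j such that μᵢ = λᵢ − 1, μⱼ = λⱼ + 1, and μₗ = λₗ for all other l. -/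
/-- A partition of `n`, encoded as a weakly decreasing function `ℕ → ℕ`
(0-indexed parts) vanishing from index `n` on and with parts summing to `n`. -/
def IsPartitionOf (n : ℕ) (l : ℕ → ℕ) : Prop :=
  (∀ i j, i ≤ j → l j ≤ l i) ∧ (∀ i, n ≤ i → l i = 0) ∧
    (∑ i ∈ Finset.range n, l i = n)

/-- The dominance order: every partial sum of `l` is at most that of `m`. -/
def DomLE (l m : ℕ → ℕ) : Prop :=
  ∀ k, ∑ i ∈ Finset.range k, l i ≤ ∑ i ∈ Finset.range k, m i

/-!
Let `j` be the first row where `m` exceeds `l`. Dominance at `j + 1` forces some earlier row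
`i` with `m i < l i`, and then `l j + 2 ≤ l i`. Moving one box of `l` from the last row of
height `l i` to the first row of height `l j` gives a partition `v` with `v < l`; its partial
sums drop by one exactly on an interval where those of `m` are strictly below those of `l`,
so `m ≤ v`. Since `l` covers `m`, `v = m`.
-/

open Finset

def moveBox (l : ℕ → ℕ) (a b : ℕ) : ℕ → ℕ :=
  Function.update (Function.update l a (l a - 1)) b (l b + 1)

section MoveBox

variable {l : ℕ → ℕ} {a b : ℕ}

theorem moveBox_apply_left (hab : a ≠ b) : moveBox l a b a = l a - 1 := by
  simp [moveBox, hab]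

theorem moveBox_apply_right : moveBox l a b b = l b + 1 := by
  simp [moveBox]

theorem moveBox_apply_of_ne {t : ℕ} (ha : t ≠ a) (hb : t ≠ b) : moveBox l a b t = l t := by
  simp [moveBox, ha, hb]

theorem moveBox_add_ite (hab : a ≠ b) (hpos : 0 < l a) (t : ℕ) :
    moveBox l a b t + (if t = a then 1 else 0) = l t + (if t = b then 1 else 0) := by
  by_cases hta : t = a
  · subst hta; simp only [moveBox_apply_left hab, ↓reduceIte, hab, add_zero]; omega
  by_cases htb : t = b
  · subst htb; simp [moveBox_apply_right, hta]
  simp [moveBox_apply_of_ne hta htb, hta, htb]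

theorem sum_range_moveBox_add_ite (hab : a ≠ b) (hpos : 0 < l a) (k : ℕ) :
    ∑ t ∈ range k, moveBox l a b t + (if a < k then 1 else 0) =
      ∑ t ∈ range k, l t + (if b < k then 1 else 0) := by
  have h := sum_congr rfl fun t (_ : t ∈ range k) => moveBox_add_ite hab hpos t
  simpa [sum_add_distrib] using h

theorem domLE_moveBox_left (hab : a < b) (hpos : 0 < l a) : DomLE (moveBox l a b) l := by
  intro k
  have := sum_range_moveBox_add_ite hab.ne hpos k
  split_ifs at this <;> omega

theorem domLE_moveBox_right {m : ℕ → ℕ} (hle : DomLE m l) (hab : a < b) (hpos : 0 < l a)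
    (hstrict : ∀ k, a < k → k ≤ b → ∑ t ∈ range k, m t < ∑ t ∈ range k, l t) :
    DomLE m (moveBox l a b) := by
  intro k
  have hsum := sum_range_moveBox_add_ite hab.ne hpos k
  have := hle k
  by_cases hak : a < k
  · by_cases hbk : b < k
    · simp only [hak, hbk, if_true] at hsum; omega
    · have := hstrict k hak (by omega)
      simp only [hak, hbk, if_true, if_false] at hsum; omega
  · simp only [hak, show ¬b < k by omega, if_false] at hsum; omega

theorem antitone_moveBox (hl : Antitone l) (hab : a < b) (ha : ∀ t, a < t → l t < l a)
    (hb : ∀ t, t < b → l b < l t) (hgap : l b + 2 ≤ l a) : Antitone (moveBox l a b) := by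
  intro p q hpq
  have hp := moveBox_add_ite hab.ne (l := l) (by omega) p
  have hq := moveBox_add_ite hab.ne (l := l) (by omega) q
  have := hl hpq
  split_ifs at hp hq <;> subst_vars
  all_goals first | omega | (have := ha q (by omega); omega) | (have := hb p (by omega); omega)

theorem isPartitionOf_moveBox {n : ℕ} (hl : IsPartitionOf n l) (hab : a < b) (hbn : b < n)
    (ha : ∀ t, a < t → l t < l a) (hb : ∀ t, t < b → l b < l t) (hgap : l b + 2 ≤ l a) :
    IsPartitionOf n (moveBox l a b) := by
  obtain ⟨hanti, hzero, hsum⟩ := hl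
  refine ⟨antitone_moveBox hanti hab ha hb hgap, fun t ht => ?_, ?_⟩
  · rw [moveBox_apply_of_ne (by omega) (by omega)]
    exact hzero t ht
  · have := sum_range_moveBox_add_ite (l := l) hab.ne (by omega) n
    simp only [show a < n by omega, hbn, if_true] at this
    omega

end MoveBox

section Antitone

variable {f : ℕ → ℕ} {i j : ℕ}

theorem Antitone.exists_last_eq_of_lt (hf : Antitone f) (h : f j < f i) :
    ∃ a, i ≤ a ∧ a < j ∧ f a = f i ∧ ∀ t, a < t → f t < f a := by
  have hex : ∃ t, f t < f i := ⟨j, h⟩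
  have hc : f (Nat.find hex) < f i := Nat.find_spec hex
  have hci : i < Nat.find hex := by
    by_contra hle
    exact absurd (hf (not_lt.mp hle)) (not_le.mpr hc)
  have hcj : Nat.find hex ≤ j := Nat.find_min' hex h
  have hprev : f i ≤ f (Nat.find hex - 1) := not_lt.mp (Nat.find_min hex (by omega))
  refine ⟨Nat.find hex - 1, by omega, by omega, le_antisymm (hf (by omega)) hprev,
    fun t ht => ?_⟩
  have := hf (show Nat.find hex ≤ t by omega)
  omega

theorem Antitone.exists_first_eq_of_lt (hf : Antitone f) (h : f j < f i) :
    ∃ b, i < b ∧ b ≤ j ∧ f b = f j ∧ ∀ t, t < b → f b < f t := by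
  have hex : ∃ t, f t ≤ f j := ⟨j, le_rfl⟩
  have hc : f (Nat.find hex) ≤ f j := Nat.find_spec hex
  have hcj : Nat.find hex ≤ j := Nat.find_min' hex le_rfl
  have hceq : f (Nat.find hex) = f j := le_antisymm hc (hf hcj)
  have hci : i < Nat.find hex := by
    by_contra hle
    have := hf (not_lt.mp hle)
    omega
  refine ⟨Nat.find hex, hci, hcj, hceq, fun t ht => ?_⟩
  have := Nat.find_min hex ht
  omega

end Antitone

theorem IsPartitionOf.antitone {n : ℕ} {l : ℕ → ℕ} (hl : IsPartitionOf n l) : Antitone l :=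
  hl.1

theorem IsPartitionOf.eq_of_le {n : ℕ} {l m : ℕ → ℕ} (hl : IsPartitionOf n l)
    (hm : IsPartitionOf n m) (hml : ∀ t, m t ≤ l t) : m = l := by
  funext t
  by_cases htn : n ≤ t
  · rw [hl.2.1 t htn, hm.2.1 t htn]
  · have hsum : ∑ s ∈ range n, m s = ∑ s ∈ range n, l s := by rw [hl.2.2, hm.2.2]
    exact (sum_eq_sum_iff_of_le fun s _ => hml s).mp hsum t (mem_range.mpr (by omega))

theorem sum_range_lt_sum_range_of_le_of_lt {m l : ℕ → ℕ} {i j k : ℕ}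
    (hle : ∀ t, t < j → m t ≤ l t) (hi : m i < l i) (hik : i < k) (hkj : k ≤ j) :
    ∑ t ∈ range k, m t < ∑ t ∈ range k, l t :=
  sum_lt_sum (fun t ht => hle t ((mem_range.mp ht).trans_le hkj)) ⟨i, mem_range.mpr hik, hi⟩

theorem exists_lt_of_domLE_of_ne {n : ℕ} {l m : ℕ → ℕ} (hl : IsPartitionOf n l)
    (hm : IsPartitionOf n m) (hle : DomLE m l) (hne : m ≠ l) :
    ∃ i j, i < j ∧ j < n ∧ m i < l i ∧ l j < m j ∧ ∀ t, t < j → m t ≤ l t := by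
  have hex : ∃ j, l j < m j := by
    by_contra! h
    exact hne (hl.eq_of_le hm h)
  set j := Nat.find hex
  have hj : l j < m j := Nat.find_spec hex
  have hbefore : ∀ t, t < j → m t ≤ l t := fun t ht => not_lt.mp (Nat.find_min hex ht)
  have hjn : j < n := by
    by_contra! hnj
    rw [hm.2.1 _ hnj] at hj
    omega
  have hsum : ∑ t ∈ range j, m t < ∑ t ∈ range j, l t := by
    have := hle (j + 1)
    rw [sum_range_succ, sum_range_succ] at this
    omega
  obtain ⟨i, hi, hmi⟩ := exists_lt_of_sum_lt hsum
  exact ⟨i, j, mem_range.mp hi, hjn, hmi, hj, hbefore⟩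

theorem exists_moveBox_between {n : ℕ} {l m : ℕ → ℕ} (hl : IsPartitionOf n l)
    (hm : IsPartitionOf n m) (hle : DomLE m l) (hne : m ≠ l) :
    ∃ a b, a < b ∧ 0 < l a ∧ IsPartitionOf n (moveBox l a b) ∧ DomLE m (moveBox l a b) := by
  obtain ⟨i, j, hij, hjn, hi, hj, hbefore⟩ := exists_lt_of_domLE_of_ne hl hm hle hne
  have hgap : l j + 2 ≤ l i := by
    have := hm.antitone hij.le
    omega
  obtain ⟨a, hia, haj, hla, ha⟩ := hl.antitone.exists_last_eq_of_lt (show l j < l i by omega)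
  obtain ⟨b, hib, hbj, hlb, hb⟩ := hl.antitone.exists_first_eq_of_lt (show l j < l i by omega)
  have hab : a < b := by
    by_contra hba
    have := hl.antitone (not_lt.mp hba)
    omega
  refine ⟨a, b, hab, by omega, isPartitionOf_moveBox hl hab (by omega) ha hb (by omega),
    domLE_moveBox_right hle hab (by omega) fun k hak hkb => ?_⟩
  exact sum_range_lt_sum_range_of_le_of_lt hbefore hi (by omega) (by omega)

/-- If `l` covers `m` in the dominance order on partitions of `n` (i.e. `m < l` and
nothing lies strictly between), then `m` is obtained from `l` by moving a single
box from some row `i` down to some row `j > i`. -/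
theorem dominance_cover_single_box_move
    (n : ℕ) (l m : ℕ → ℕ) (hl : IsPartitionOf n l) (hm : IsPartitionOf n m)
    (hle : DomLE m l) (hne : m ≠ l)
    (hcov : ∀ v, IsPartitionOf n v → DomLE m v → DomLE v l → v = m ∨ v = l) :
    ∃ i j, i < j ∧ m i + 1 = l i ∧ m j = l j + 1 ∧
      ∀ t, t ≠ i → t ≠ j → m t = l t := by
  obtain ⟨a, b, hab, hpos, hpart, hdom⟩ := exists_moveBox_between hl hm hle hne
  have hvl : moveBox l a b ≠ l := fun h => by
    have := congrFun h a
    rw [moveBox_apply_left hab.ne] at this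
    omega
  have hvm : moveBox l a b = m :=
    (hcov _ hpart hdom (domLE_moveBox_left hab hpos)).resolve_right hvl
  subst hvm
  refine ⟨a, b, hab, ?_, moveBox_apply_right, fun t hta htb => moveBox_apply_of_ne hta htb⟩
  rw [moveBox_apply_left hab.ne]
  omega
end

section
/- If w ∈ Sₙ corresponds to the pair of standard Young tableaux (P, Q) under the Robinson–Schensted correspondence, then w⁻¹ corresponds to (Q, P). -/
/-- Schensted row insertion of `x` into a tableau given as a list of rows. -/
def rowInsert : List (List ℕ) → ℕ → List (List ℕ)
  | [], x => [[x]]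
  | r :: rs, x =>
    match r.findIdx? (fun y => x < y) with
    | none => (r ++ [x]) :: rs
    | some i => r.set i x :: rowInsert rs (r.getD i 0)

/-- The shape of a tableau: the list of row lengths. -/
def shapeOf (T : List (List ℕ)) : List ℕ := T.map List.length

/-- Add a box labelled `k` at the end of row `row` (creating the row if needed). -/
def addBox (Q : List (List ℕ)) (row k : ℕ) : List (List ℕ) :=
  if row < Q.length then Q.set row (Q.getD row [] ++ [k]) else Q ++ [[k]]

/-- The Robinson–Schensted correspondence on words: the pair `(P, Q)` of the
insertion tableau and the recording tableau. -/
def RSpair (w : List ℕ) : List (List ℕ) × List (List ℕ) :=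
  (w.zipIdx.map Prod.swap).foldl
    (fun PQ ix =>
      let P' := rowInsert PQ.1 ix.2
      let row := (List.range P'.length).findIdx
        (fun j => (shapeOf PQ.1).getD j 0 ≠ (shapeOf P').getD j 0)
      (P', addBox PQ.2 row (ix.1 + 1)))
    ([], [])

/-- The one-line word (with values in `{1, …, n}`) of a permutation of `Fin n`. -/
def permWord {n : ℕ} (w : Equiv.Perm (Fin n)) : List ℕ :=
  List.ofFn fun i => (w i : ℕ) + 1

/-- The insertion tableau `P(w)` of a permutation. -/
def RSP {n : ℕ} (w : Equiv.Perm (Fin n)) : List (List ℕ) := (RSpair (permWord w)).1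

/-- The recording tableau `Q(w)` of a permutation. -/
def RSQ {n : ℕ} (w : Equiv.Perm (Fin n)) : List (List ℕ) := (RSpair (permWord w)).2

/-!
Knuth's proof. Regard `w` as the set of points `(i, w i)`, and call the class of a point the
length of the longest chain of points, increasing in both coordinates, that ends there. Each class
is an antichain, and inserting the points from left to right one shows that the `j`-th entry of
the first row of `P` (of `Q`) is the least ordinate (abscissa) of the points of class `j`, while the
letters bumped out of the first row are the points `(f.1, e.2)` for consecutive points `e, f` of a
class. All these data are symmetric under `(x, y) ↦ (y, x)`, and the rows below the first one are
the tableaux of the bumped array, so induction on its length finishes the proof.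
-/

namespace RobinsonSchensted

/-- The index of the row in which inserting `x` into `T` creates a new box. -/
def bumpDepth : List (List ℕ) → ℕ → ℕ
  | [], _ => 0
  | r :: rs, x =>
    match r.findIdx? (fun y => x < y) with
    | none => 0
    | some i => bumpDepth rs (r.getD i 0) + 1

lemma length_rowInsert (T : List (List ℕ)) (x : ℕ) :
    (rowInsert T x).length = max T.length (bumpDepth T x + 1) := by
  induction T generalizing x with
  | nil => simp [rowInsert, bumpDepth]
  | cons r rs ih =>
    rw [rowInsert, bumpDepth]
    rcases r.findIdx? (fun y => x < y) with _ | i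
    · simp
    · simp only [List.length_cons, ih]
      omega

lemma getD_shapeOf_rowInsert (T : List (List ℕ)) (x j : ℕ) :
    (shapeOf (rowInsert T x)).getD j 0
      = (shapeOf T).getD j 0 + if j = bumpDepth T x then 1 else 0 := by
  induction T generalizing x j with
  | nil => rcases j with _ | k <;> simp [rowInsert, bumpDepth, shapeOf]
  | cons r rs ih =>
    rw [rowInsert, bumpDepth]
    rcases r.findIdx? (fun y => x < y) with _ | i
    · rcases j with _ | k <;> simp [shapeOf]
    · rcases j with _ | k
      · simp [shapeOf]
      · simpa [shapeOf] using ih (r.getD i 0) k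

lemma findIdx_shape_ne_rowInsert (T : List (List ℕ)) (x : ℕ) :
    (List.range (rowInsert T x).length).findIdx
      (fun j => (shapeOf T).getD j 0 ≠ (shapeOf (rowInsert T x)).getD j 0) = bumpDepth T x := by
  have hlt : bumpDepth T x < (rowInsert T x).length := by rw [length_rowInsert]; omega
  rw [List.findIdx_eq (by simpa using hlt)]
  refine ⟨?_, fun j hj => ?_⟩ <;> simp only [List.getElem_range, getD_shapeOf_rowInsert]
  · simp
  · simp [Nat.ne_of_lt hj]

def insertPair (PQ : List (List ℕ) × List (List ℕ)) (e : ℕ × ℕ) :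
    List (List ℕ) × List (List ℕ) :=
  (rowInsert PQ.1 e.2, addBox PQ.2 (bumpDepth PQ.1 e.2) e.1)

/-- Robinson–Schensted on a two-line array, read as a list of columns `(label, letter)`. -/
def rsBiword (l : List (ℕ × ℕ)) : List (List ℕ) × List (List ℕ) :=
  l.foldl insertPair ([], [])

lemma RSpair_eq_rsBiword (w : List ℕ) :
    RSpair w = rsBiword ((w.zipIdx.map Prod.swap).map fun ix => (ix.1 + 1, ix.2)) := by
  unfold RSpair rsBiword insertPair
  rw [List.foldl_map, List.foldl_map, List.foldl_map]
  simp only [findIdx_shape_ne_rowInsert]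

/-- The state of the first row while a two-line array is inserted: the first rows of `P` and
`Q`, and the columns `(label, bumped letter)` passed on to the rows below. -/
structure RowState where
  pRow : List ℕ
  qRow : List ℕ
  bumped : List (ℕ × ℕ)

def RowState.step (σ : RowState) (e : ℕ × ℕ) : RowState :=
  match σ.pRow.findIdx? (fun y => e.2 < y) with
  | none => ⟨σ.pRow ++ [e.2], σ.qRow ++ [e.1], σ.bumped⟩
  | some i => ⟨σ.pRow.set i e.2, σ.qRow, σ.bumped ++ [(e.1, σ.pRow.getD i 0)]⟩

def firstRowPass (l : List (ℕ × ℕ)) : RowState :=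
  l.foldl RowState.step ⟨[], [], []⟩

lemma length_pRow_add_length_bumped_firstRowPass (l : List (ℕ × ℕ)) :
    (firstRowPass l).pRow.length + (firstRowPass l).bumped.length = l.length := by
  suffices ∀ σ : RowState, (l.foldl RowState.step σ).pRow.length
      + (l.foldl RowState.step σ).bumped.length = σ.pRow.length + σ.bumped.length + l.length by
    simpa [firstRowPass] using this ⟨[], [], []⟩
  induction l with
  | nil => simp
  | cons e l ih =>
    intro σ
    rw [List.foldl_cons, ih, RowState.step]
    rcases σ.pRow.findIdx? (fun y => e.2 < y) with _ | i <;> simp <;> omega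

lemma pRow_foldl_step_ne_nil (l : List (ℕ × ℕ)) (σ : RowState) (h : σ.pRow ≠ []) :
    (l.foldl RowState.step σ).pRow ≠ [] := by
  induction l generalizing σ with
  | nil => exact h
  | cons e l ih =>
    refine ih _ ?_
    rw [RowState.step]
    rcases σ.pRow.findIdx? (fun y => e.2 < y) with _ | i <;> simp [h]

lemma length_bumped_firstRowPass_lt {l : List (ℕ × ℕ)} (hl : l ≠ []) :
    (firstRowPass l).bumped.length < l.length := by
  obtain ⟨e, l, rfl⟩ := List.exists_cons_of_ne_nil hl
  have hne : (firstRowPass (e :: l)).pRow ≠ [] :=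
    pRow_foldl_step_ne_nil l _ (by simp [RowState.step])
  have := length_pRow_add_length_bumped_firstRowPass (e :: l)
  have := List.length_pos_iff.2 hne
  omega

def RowState.toPair (σ : RowState) : List (List ℕ) × List (List ℕ) :=
  (σ.pRow :: (rsBiword σ.bumped).1, σ.qRow :: (rsBiword σ.bumped).2)

lemma addBox_cons_zero (a : List ℕ) (Q : List (List ℕ)) (k : ℕ) :
    addBox (a :: Q) 0 k = (a ++ [k]) :: Q := by
  simp [addBox]

lemma addBox_cons_succ (a : List ℕ) (Q : List (List ℕ)) (j k : ℕ) :
    addBox (a :: Q) (j + 1) k = a :: addBox Q j k := by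
  unfold addBox
  by_cases h : j < Q.length
  · simp [h]
  · simp [h]

lemma insertPair_toPair (σ : RowState) (e : ℕ × ℕ) :
    insertPair σ.toPair e = (σ.step e).toPair := by
  unfold insertPair RowState.toPair RowState.step
  rw [rowInsert, bumpDepth]
  rcases σ.pRow.findIdx? (fun y => e.2 < y) with _ | i
  · simp [addBox_cons_zero]
  · simp [addBox_cons_succ, rsBiword, insertPair]

lemma rsBiword_eq_toPair_firstRowPass {l : List (ℕ × ℕ)} (hl : l ≠ []) :
    rsBiword l = (firstRowPass l).toPair := by
  obtain ⟨e, l, rfl⟩ := List.exists_cons_of_ne_nil hl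
  have hfirst : insertPair ([], []) e = (RowState.step ⟨[], [], []⟩ e).toPair := by
    simp [insertPair, RowState.step, RowState.toPair, rowInsert, bumpDepth, addBox, rsBiword]
  rw [rsBiword, firstRowPass, List.foldl_cons, List.foldl_cons, hfirst]
  exact List.foldl_hom _ insertPair_toPair

/-- Schensted's class of `e` in `s`: the length of the longest chain of `s`, increasing in both
coordinates, that ends at `e`. -/
def rsClass (s : Finset (ℕ × ℕ)) (e : ℕ × ℕ) : ℕ :=
  ((s.filter fun f => f.1 < e.1 ∧ f.2 < e.2).attach.sup fun f => rsClass s f.1) + 1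
termination_by e.1
decreasing_by exact (Finset.mem_filter.1 f.2).2.1

lemma rsClass_eq (s : Finset (ℕ × ℕ)) (e : ℕ × ℕ) :
    rsClass s e = (s.filter fun f => f.1 < e.1 ∧ f.2 < e.2).sup (rsClass s) + 1 := by
  rw [rsClass, Finset.sup_attach]

lemma one_le_rsClass (s : Finset (ℕ × ℕ)) (e : ℕ × ℕ) : 1 ≤ rsClass s e := by
  rw [rsClass_eq]; omega

lemma rsClass_lt_rsClass {s : Finset (ℕ × ℕ)} {e f : ℕ × ℕ} (hf : f ∈ s) (h1 : f.1 < e.1)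
    (h2 : f.2 < e.2) : rsClass s f < rsClass s e := by
  rw [rsClass_eq s e, Nat.lt_succ_iff]
  exact Finset.le_sup (f := rsClass s) (by simp [hf, h1, h2])

lemma exists_pred_of_one_lt_rsClass {s : Finset (ℕ × ℕ)} {e : ℕ × ℕ}
    (h : 1 < rsClass s e) :
    ∃ f ∈ s, f.1 < e.1 ∧ f.2 < e.2 ∧ rsClass s f + 1 = rsClass s e := by
  rw [rsClass_eq] at h ⊢
  have hne : (s.filter fun f => f.1 < e.1 ∧ f.2 < e.2).Nonempty := by
    contrapose! h
    simp [h]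
  obtain ⟨f, hf, hsup⟩ := Finset.exists_mem_eq_sup _ hne (rsClass s)
  rw [Finset.mem_filter] at hf
  exact ⟨f, hf.1, hf.2.1, hf.2.2, by rw [hsup]⟩

lemma exists_rsClass_eq_of_lt {s : Finset (ℕ × ℕ)} {e : ℕ × ℕ} {m : ℕ} (hm : 1 ≤ m)
    (h : m < rsClass s e) : ∃ f ∈ s, f.1 < e.1 ∧ f.2 < e.2 ∧ rsClass s f = m := by
  obtain ⟨f, hf, h1, h2, hfe⟩ := exists_pred_of_one_lt_rsClass (by omega : 1 < rsClass s e)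
  rcases (show m = rsClass s f ∨ m < rsClass s f by omega) with rfl | hlt
  · exact ⟨f, hf, h1, h2, rfl⟩
  · obtain ⟨g, hg, hg1, hg2, rfl⟩ := exists_rsClass_eq_of_lt hm hlt
    exact ⟨g, hg, hg1.trans h1, hg2.trans h2, rfl⟩
termination_by e.1

lemma rsClass_image_swap (s : Finset (ℕ × ℕ)) (e : ℕ × ℕ) :
    rsClass (s.image Prod.swap) e.swap = rsClass s e := by
  have hbelow : (s.image Prod.swap).filter (fun f => f.1 < e.swap.1 ∧ f.2 < e.swap.2)
      = (s.filter fun f => f.1 < e.1 ∧ f.2 < e.2).image Prod.swap := by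
    ext x
    simp only [Finset.mem_filter, Finset.mem_image]
    constructor
    · rintro ⟨⟨g, hg, rfl⟩, h1, h2⟩
      exact ⟨g, ⟨hg, h2, h1⟩, rfl⟩
    · rintro ⟨g, ⟨hg, h1, h2⟩, rfl⟩
      exact ⟨⟨g, hg, rfl⟩, h2, h1⟩
  rw [rsClass_eq, rsClass_eq, hbelow, Finset.sup_image]
  congr 1
  refine Finset.sup_congr rfl fun f hf => ?_
  have : f.1 < e.1 := (Finset.mem_filter.1 hf).2.1
  exact rsClass_image_swap s f
termination_by e.1

def IsGrid (s : Finset (ℕ × ℕ)) : Prop :=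
  Set.InjOn Prod.fst (s : Set (ℕ × ℕ)) ∧ Set.InjOn Prod.snd (s : Set (ℕ × ℕ))

namespace IsGrid

variable {s : Finset (ℕ × ℕ)} {e f : ℕ × ℕ}

lemma image_swap (hs : IsGrid s) : IsGrid (s.image Prod.swap) := by
  rw [IsGrid, Finset.coe_image]
  constructor <;> rintro _ ⟨a, ha, rfl⟩ _ ⟨b, hb, rfl⟩ hab
  · rw [hs.2 ha hb hab]
  · rw [hs.1 ha hb hab]

lemma fst_lt_iff_snd_lt (hs : IsGrid s) (he : e ∈ s) (hf : f ∈ s)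
    (hc : rsClass s e = rsClass s f) : e.1 < f.1 ↔ f.2 < e.2 := by
  have hchain {a b : ℕ × ℕ} (ha : a ∈ s) (hb : b ∈ s) (hab : rsClass s a = rsClass s b)
      (h1 : a.1 < b.1) : b.2 < a.2 := by
    rcases lt_trichotomy a.2 b.2 with h2 | h2 | h2
    · exact absurd hab (rsClass_lt_rsClass ha h1 h2).ne
    · exact absurd (hs.2 ha hb h2) (by rintro rfl; omega)
    · exact h2
  refine ⟨hchain he hf hc, fun h2 => ?_⟩
  rcases lt_trichotomy e.1 f.1 with h1 | h1 | h1
  · exact h1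
  · exact absurd (hs.1 he hf h1) (by rintro rfl; omega)
  · exact absurd (hchain hf he hc.symm h1) (by omega)

end IsGrid

def IsClassSucc (s : Finset (ℕ × ℕ)) (e f : ℕ × ℕ) : Prop :=
  e ∈ s ∧ f ∈ s ∧ rsClass s e = rsClass s f ∧ e.1 < f.1 ∧
    ∀ g ∈ s, rsClass s g = rsClass s e → ¬(e.1 < g.1 ∧ g.1 < f.1)

namespace IsClassSucc

variable {s : Finset (ℕ × ℕ)} {e e' f f' : ℕ × ℕ}

lemma left_unique (hs : IsGrid s) (h : IsClassSucc s e f) (h' : IsClassSucc s e' f) :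
    e = e' := by
  obtain ⟨he, -, hc, h1, hbtw⟩ := h
  obtain ⟨he', -, hc', h1', hbtw'⟩ := h'
  by_contra hne
  rcases lt_or_gt_of_ne (mt (hs.1 he he') hne) with hlt | hlt
  · exact hbtw e' he' (by omega) ⟨hlt, h1'⟩
  · exact hbtw' e he (by omega) ⟨hlt, h1⟩

lemma right_unique (hs : IsGrid s) (h : IsClassSucc s e f) (h' : IsClassSucc s e f') :
    f = f' := by
  obtain ⟨-, hf, hc, h1, hbtw⟩ := h
  obtain ⟨-, hf', hc', h1', hbtw'⟩ := h'
  by_contra hne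
  rcases lt_or_gt_of_ne (mt (hs.1 hf hf') hne) with hlt | hlt
  · exact hbtw' f hf (by omega) ⟨h1, hlt⟩
  · exact hbtw f' hf' (by omega) ⟨h1', hlt⟩

/-- Within a class, the order by abscissae is the reverse of the order by ordinates. -/
lemma image_swap (hs : IsGrid s) (h : IsClassSucc s e f) :
    IsClassSucc (s.image Prod.swap) f.swap e.swap := by
  obtain ⟨he, hf, hc, h1, hbtw⟩ := h
  refine ⟨Finset.mem_image_of_mem _ hf, Finset.mem_image_of_mem _ he, ?_,
    (hs.fst_lt_iff_snd_lt he hf hc).1 h1, ?_⟩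
  · rw [rsClass_image_swap, rsClass_image_swap, hc]
  rintro _ hg' hgc ⟨hfg, hge⟩
  obtain ⟨g, hg, rfl⟩ := Finset.mem_image.1 hg'
  rw [rsClass_image_swap, rsClass_image_swap] at hgc
  exact hbtw g hg (hgc.trans hc.symm)
    ⟨(hs.fst_lt_iff_snd_lt he hg (hc.trans hgc.symm)).2 hge,
      (hs.fst_lt_iff_snd_lt hg hf hgc).2 hfg⟩

lemma image_swap_iff (hs : IsGrid s) :
    IsClassSucc (s.image Prod.swap) f.swap e.swap ↔ IsClassSucc s e f := by
  refine ⟨fun h => ?_, image_swap hs⟩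
  simpa [Finset.image_image, Function.comp_def] using h.image_swap hs.image_swap

end IsClassSucc

def classSnds (s : Finset (ℕ × ℕ)) (u : Set (ℕ × ℕ)) (c : ℕ) : Set ℕ :=
  Prod.snd '' {g ∈ u | rsClass s g = c}

def classFsts (s : Finset (ℕ × ℕ)) (u : Set (ℕ × ℕ)) (c : ℕ) : Set ℕ :=
  Prod.fst '' {g ∈ u | rsClass s g = c}

/-- Knuth's derived array: the columns that the first row passes on to the second. -/
def bumpSet (s : Finset (ℕ × ℕ)) (u : Set (ℕ × ℕ)) : Set (ℕ × ℕ) :=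
  {x | ∃ e ∈ u, ∃ f ∈ u, IsClassSucc s e f ∧ x = (f.1, e.2)}

lemma classSnds_image_swap (s : Finset (ℕ × ℕ)) (c : ℕ) :
    classSnds (s.image Prod.swap) ↑(s.image Prod.swap) c = classFsts s ↑s c := by
  ext x
  simp [classSnds, classFsts, ← rsClass_image_swap s]

lemma classFsts_image_swap (s : Finset (ℕ × ℕ)) (c : ℕ) :
    classFsts (s.image Prod.swap) ↑(s.image Prod.swap) c = classSnds s ↑s c := by
  ext x
  simp [classSnds, classFsts, ← rsClass_image_swap s]

lemma classSnds_nonempty_iff (s : Finset (ℕ × ℕ)) (u : Set (ℕ × ℕ)) (c : ℕ) :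
    (classSnds s u c).Nonempty ↔ (classFsts s u c).Nonempty := by
  rw [classSnds, classFsts, Set.image_nonempty, Set.image_nonempty]

lemma bumpSet_image_swap {s : Finset (ℕ × ℕ)} (hs : IsGrid s) :
    bumpSet (s.image Prod.swap) ↑(s.image Prod.swap) = Prod.swap '' bumpSet s ↑s := by
  ext x
  simp only [bumpSet, Finset.coe_image, Set.mem_image, Set.mem_ofPred_eq, Finset.mem_coe]
  constructor
  · rintro ⟨_, ⟨a, ha, rfl⟩, _, ⟨b, hb, rfl⟩, hab, rfl⟩
    exact ⟨(a.1, b.2), ⟨b, hb, a, ha, (IsClassSucc.image_swap_iff hs).1 hab, rfl⟩, rfl⟩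
  · rintro ⟨_, ⟨b, hb, a, ha, hba, rfl⟩, rfl⟩
    exact ⟨a.swap, ⟨a, ha, rfl⟩, b.swap, ⟨b, hb, rfl⟩, hba.image_swap hs, rfl⟩

lemma classSnds_insert (s : Finset (ℕ × ℕ)) (u : Set (ℕ × ℕ)) (e : ℕ × ℕ) (c : ℕ) :
    classSnds s (insert e u) c
      = if rsClass s e = c then insert e.2 (classSnds s u c) else classSnds s u c := by
  unfold classSnds
  split_ifs with h <;> ext x <;>
    simp only [Set.mem_image, Set.mem_insert_iff, Set.mem_sep_iff] <;> aesop

lemma classFsts_insert (s : Finset (ℕ × ℕ)) (u : Set (ℕ × ℕ)) (e : ℕ × ℕ) (c : ℕ) :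
    classFsts s (insert e u) c
      = if rsClass s e = c then insert e.1 (classFsts s u c) else classFsts s u c := by
  unfold classFsts
  split_ifs with h <;> ext x <;>
    simp only [Set.mem_image, Set.mem_insert_iff, Set.mem_sep_iff] <;> aesop

lemma mem_bumpSet_insert {s : Finset (ℕ × ℕ)} {u : Set (ℕ × ℕ)} {e x : ℕ × ℕ}
    (hlt : ∀ g ∈ u, g.1 < e.1) :
    x ∈ bumpSet s (insert e u) ↔
      x ∈ bumpSet s u ∨ ∃ g ∈ u, IsClassSucc s g e ∧ x = (e.1, g.2) := by
  constructor
  · rintro ⟨a, ha, b, hb, hab, rfl⟩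
    have hfst : ¬ e.1 < b.1 := by
      rcases hb with rfl | hb
      · exact lt_irrefl _
      · exact (hlt b hb).not_gt
    rcases ha with rfl | ha
    · exact absurd hab.2.2.2.1 hfst
    rcases hb with rfl | hb
    · exact Or.inr ⟨a, ha, hab, rfl⟩
    · exact Or.inl ⟨a, ha, b, hb, hab, rfl⟩
  · rintro (⟨a, ha, b, hb, hab, rfl⟩ | ⟨g, hg, hge, rfl⟩)
    · exact ⟨a, Or.inr ha, b, Or.inr hb, hab, rfl⟩
    · exact ⟨g, Or.inr hg, e, Or.inl rfl, hge, rfl⟩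

/-- Knuth's description of the first row after the points `u` of `s` have been inserted. -/
structure FirstRowSpec (s : Finset (ℕ × ℕ)) (u : Set (ℕ × ℕ)) (σ : RowState) : Prop where
  length_qRow : σ.qRow.length = σ.pRow.length
  lt_length_of_nonempty : ∀ c, (classSnds s u (c + 1)).Nonempty → c < σ.pRow.length
  isLeast_pRow : ∀ j (hj : j < σ.pRow.length), IsLeast (classSnds s u (j + 1)) σ.pRow[j]
  isLeast_qRow : ∀ j (hj : j < σ.qRow.length), IsLeast (classFsts s u (j + 1)) σ.qRow[j]
  bumped_sorted : σ.bumped.Pairwise fun a b => a.1 < b.1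
  mem_bumped : ∀ x, x ∈ σ.bumped ↔ x ∈ bumpSet s u

lemma firstRowSpec_empty (s : Finset (ℕ × ℕ)) : FirstRowSpec s ∅ ⟨[], [], []⟩ where
  length_qRow := rfl
  lt_length_of_nonempty c := by simp [classSnds]
  isLeast_pRow j hj := absurd hj (Nat.not_lt_zero j)
  isLeast_qRow j hj := absurd hj (Nat.not_lt_zero j)
  bumped_sorted := List.Pairwise.nil
  mem_bumped x := by simp [bumpSet]

namespace FirstRowSpec

variable {s : Finset (ℕ × ℕ)} {u : Set (ℕ × ℕ)} {σ : RowState} {e : ℕ × ℕ}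

lemma lt_length_iff (hσ : FirstRowSpec s u σ) (j : ℕ) :
    j < σ.pRow.length ↔ (classSnds s u (j + 1)).Nonempty :=
  ⟨fun hj => ⟨_, (hσ.isLeast_pRow j hj).1⟩, hσ.lt_length_of_nonempty j⟩

lemma pRow_lt (hσ : FirstRowSpec s u σ) (hu : ∀ g, g ∈ u ↔ g ∈ s ∧ g.1 < e.1) {j : ℕ}
    (hj : j + 2 ≤ rsClass s e) : ∃ h : j < σ.pRow.length, σ.pRow[j] < e.2 := by
  obtain ⟨f, hf, h1, h2, hfc⟩ :=
    exists_rsClass_eq_of_lt (s := s) (e := e) (m := j + 1) (by omega) (by omega)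
  have hmem : f.2 ∈ classSnds s u (j + 1) := ⟨f, ⟨(hu f).2 ⟨hf, h1⟩, hfc⟩, rfl⟩
  have hjl := hσ.lt_length_of_nonempty j ⟨_, hmem⟩
  exact ⟨hjl, ((hσ.isLeast_pRow j hjl).2 hmem).trans_lt h2⟩

lemma lt_pRow (hσ : FirstRowSpec s u σ) (hs : IsGrid s) (he : e ∈ s)
    (hu : ∀ g, g ∈ u ↔ g ∈ s ∧ g.1 < e.1) {j : ℕ} (hj : rsClass s e = j + 1)
    (hjl : j < σ.pRow.length) : e.2 < σ.pRow[j] := by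
  obtain ⟨g, ⟨hgu, hgc⟩, hg⟩ := (hσ.isLeast_pRow j hjl).1
  obtain ⟨hgs, hge⟩ := (hu g).1 hgu
  rw [← hg]
  exact (hs.fst_lt_iff_snd_lt hgs he (hgc.trans hj.symm)).1 hge

lemma rsClass_le (hσ : FirstRowSpec s u σ) (hu : ∀ g, g ∈ u ↔ g ∈ s ∧ g.1 < e.1) :
    rsClass s e ≤ σ.pRow.length + 1 := by
  by_contra! h
  obtain ⟨hl, -⟩ := hσ.pRow_lt hu (j := σ.pRow.length) (by omega)
  exact lt_irrefl _ hl

lemma step_eq_of_lt_length (hσ : FirstRowSpec s u σ) (hs : IsGrid s) (he : e ∈ s)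
    (hu : ∀ g, g ∈ u ↔ g ∈ s ∧ g.1 < e.1) {j : ℕ} (hj : rsClass s e = j + 1)
    (hjl : j < σ.pRow.length) :
    σ.step e = ⟨σ.pRow.set j e.2, σ.qRow, σ.bumped ++ [(e.1, σ.pRow[j])]⟩ := by
  have hfind : σ.pRow.findIdx? (fun y => e.2 < y) = some j := by
    rw [List.findIdx?_eq_some_iff_findIdx_eq, List.findIdx_eq hjl]
    refine ⟨hjl, by simpa using hσ.lt_pRow hs he hu hj hjl, fun i hi => ?_⟩
    obtain ⟨_, h⟩ := hσ.pRow_lt hu (j := i) (by omega)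
    simpa using h.le
  rw [RowState.step, hfind]
  simp [List.getElem?_eq_getElem hjl]

lemma step_eq_of_eq_length (hσ : FirstRowSpec s u σ) (hu : ∀ g, g ∈ u ↔ g ∈ s ∧ g.1 < e.1)
    (hj : rsClass s e = σ.pRow.length + 1) :
    σ.step e = ⟨σ.pRow ++ [e.2], σ.qRow ++ [e.1], σ.bumped⟩ := by
  have hfind : σ.pRow.findIdx? (fun y => e.2 < y) = none := by
    rw [List.findIdx?_eq_none_iff]
    intro x hx
    obtain ⟨i, hi, rfl⟩ := List.mem_iff_getElem.1 hx
    obtain ⟨_, h⟩ := hσ.pRow_lt hu (j := i) (by omega)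
    simpa using h.le
  rw [RowState.step, hfind]

lemma isClassSucc_of_isLeast (hσ : FirstRowSpec s u σ) (hs : IsGrid s) (he : e ∈ s)
    (hu : ∀ g, g ∈ u ↔ g ∈ s ∧ g.1 < e.1) {j : ℕ} (hj : rsClass s e = j + 1)
    (hjl : j < σ.pRow.length) {f : ℕ × ℕ} (hf : f ∈ u) (hfc : rsClass s f = j + 1)
    (hfj : f.2 = σ.pRow[j]) : IsClassSucc s f e := by
  obtain ⟨hfs, hfe⟩ := (hu f).1 hf
  refine ⟨hfs, he, hfc.trans hj.symm, hfe, fun g hg hgc ⟨h1, h2⟩ => ?_⟩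
  have hfg : f.2 ≤ g.2 :=
    hfj ▸ (hσ.isLeast_pRow j hjl).2 ⟨g, ⟨(hu g).2 ⟨hg, h2⟩, hgc.trans hfc⟩, rfl⟩
  have := (hs.fst_lt_iff_snd_lt hfs hg hgc.symm).1 h1
  omega

lemma set_pRow (hσ : FirstRowSpec s u σ) (hs : IsGrid s) (he : e ∈ s)
    (hu : ∀ g, g ∈ u ↔ g ∈ s ∧ g.1 < e.1) {j : ℕ} (hj : rsClass s e = j + 1)
    (hjl : j < σ.pRow.length) :
    FirstRowSpec s (insert e u) ⟨σ.pRow.set j e.2, σ.qRow, σ.bumped ++ [(e.1, σ.pRow[j])]⟩ := by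
  obtain ⟨⟨f, ⟨hfu, hfc⟩, hfj⟩, -⟩ := hσ.isLeast_pRow j hjl
  have hsucc := hσ.isClassSucc_of_isLeast hs he hu hj hjl hfu hfc hfj
  have hlt (g) (hg : g ∈ u) : g.1 < e.1 := ((hu g).1 hg).2
  refine ⟨by simpa using hσ.length_qRow, fun c hc => ?_, fun i hi => ?_, fun i hi => ?_, ?_, ?_⟩
  · rw [classSnds_insert] at hc
    show c < (σ.pRow.set j e.2).length
    rw [List.length_set]
    split_ifs at hc with hce
    · omega
    · exact hσ.lt_length_of_nonempty c hc
  · simp only [List.length_set] at hi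
    rw [List.getElem_set, classSnds_insert]
    split_ifs with hci hji hji
    · subst hji
      have := (hσ.isLeast_pRow j hjl).insert e.2
      rwa [min_eq_left (hσ.lt_pRow hs he hu hj hjl).le] at this
    · omega
    · omega
    · exact hσ.isLeast_pRow i hi
  · rw [classFsts_insert]
    split_ifs with hce
    · have hqi := hσ.isLeast_qRow i hi
      have hq : σ.qRow[i] ≤ e.1 :=
        (hqi.2 ⟨f, ⟨hfu, hfc.trans (hj.symm.trans hce)⟩, rfl⟩).trans (hlt f hfu).le
      have := hqi.insert e.1
      rwa [min_eq_right hq] at this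
    · exact hσ.isLeast_qRow i hi
  · refine List.pairwise_append.2 ⟨hσ.bumped_sorted, List.pairwise_singleton _ _, ?_⟩
    intro x hx y hy
    rw [List.mem_singleton] at hy
    subst hy
    obtain ⟨-, -, g, hg, -, rfl⟩ := (hσ.mem_bumped x).1 hx
    exact hlt g hg
  · intro x
    rw [List.mem_append, hσ.mem_bumped, mem_bumpSet_insert hlt, List.mem_singleton]
    refine or_congr_right ⟨?_, ?_⟩
    · rintro rfl
      exact ⟨f, hfu, hsucc, by rw [hfj]⟩
    · rintro ⟨g, -, hg, rfl⟩
      rw [hg.left_unique hs hsucc, hfj]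

lemma append_pRow (hσ : FirstRowSpec s u σ) (hlt : ∀ g ∈ u, g.1 < e.1)
    (hj : rsClass s e = σ.pRow.length + 1) :
    FirstRowSpec s (insert e u) ⟨σ.pRow ++ [e.2], σ.qRow ++ [e.1], σ.bumped⟩ := by
  have hempty : ∀ g ∈ u, rsClass s g ≠ rsClass s e := by
    intro g hg hgc
    have := hσ.lt_length_of_nonempty σ.pRow.length ⟨g.2, g, ⟨hg, hgc.trans hj⟩, rfl⟩
    omega
  have hSnds : classSnds s u (rsClass s e) = ∅ :=
    Set.eq_empty_iff_forall_notMem.2 fun _ ⟨g, ⟨hg, hgc⟩, _⟩ => hempty g hg hgc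
  have hFsts : classFsts s u (rsClass s e) = ∅ :=
    Set.eq_empty_iff_forall_notMem.2 fun _ ⟨g, ⟨hg, hgc⟩, _⟩ => hempty g hg hgc
  have := hσ.length_qRow
  refine ⟨by simp [this], fun c hc => ?_, fun i hi => ?_, fun i hi => ?_,
    hσ.bumped_sorted, fun x => ?_⟩
  · rw [classSnds_insert] at hc
    split_ifs at hc with hce
    · simp; omega
    · have := hσ.lt_length_of_nonempty c hc
      simp; omega
  · rw [classSnds_insert]
    simp only [List.length_append, List.length_singleton] at hi
    rcases Nat.lt_or_ge i σ.pRow.length with hil | hil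
    · rw [List.getElem_append_left hil, if_neg (by omega)]
      exact hσ.isLeast_pRow i hil
    · rw [List.getElem_concat_length (by omega), if_pos (by omega),
        show i + 1 = rsClass s e by omega, hSnds, ← Set.singleton_def]
      exact isLeast_singleton
  · rw [classFsts_insert]
    simp only [List.length_append, List.length_singleton] at hi
    rcases Nat.lt_or_ge i σ.qRow.length with hil | hil
    · rw [List.getElem_append_left hil, if_neg (by omega)]
      exact hσ.isLeast_qRow i hil
    · rw [List.getElem_concat_length (by omega), if_pos (by omega),
        show i + 1 = rsClass s e by omega, hFsts, ← Set.singleton_def]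
      exact isLeast_singleton
  · rw [hσ.mem_bumped, mem_bumpSet_insert hlt]
    refine (or_iff_left ?_).symm
    rintro ⟨g, hg, hge, -⟩
    exact hempty g hg hge.2.2.1

lemma step (hσ : FirstRowSpec s u σ) (hs : IsGrid s) (he : e ∈ s)
    (hu : ∀ g, g ∈ u ↔ g ∈ s ∧ g.1 < e.1) : FirstRowSpec s (insert e u) (σ.step e) := by
  obtain ⟨j, hj⟩ := Nat.exists_eq_add_one.2 (one_le_rsClass s e)
  rcases Nat.lt_or_ge j σ.pRow.length with hjl | hjl
  · rw [hσ.step_eq_of_lt_length hs he hu hj hjl]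
    exact hσ.set_pRow hs he hu hj hjl
  · have hj' : rsClass s e = σ.pRow.length + 1 := by have := hσ.rsClass_le hu; omega
    rw [hσ.step_eq_of_eq_length hu hj']
    exact hσ.append_pRow (fun g hg => ((hu g).1 hg).2) hj'

end FirstRowSpec

def IsBiword (l : List (ℕ × ℕ)) : Prop :=
  l.Pairwise (fun a b => a.1 < b.1) ∧ l.Pairwise (fun a b => a.2 ≠ b.2)

lemma eq_of_pairwise_fst_lt {l₁ l₂ : List (ℕ × ℕ)} (h₁ : l₁.Pairwise fun a b => a.1 < b.1)
    (h₂ : l₂.Pairwise fun a b => a.1 < b.1) (h : ∀ x, x ∈ l₁ ↔ x ∈ l₂) : l₁ = l₂ := by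
  have hnodup {l : List (ℕ × ℕ)} (hl : l.Pairwise fun a b => a.1 < b.1) : l.Nodup :=
    hl.imp fun hab heq => by subst heq; exact lt_irrefl _ hab
  have : Std.Antisymm fun a b : ℕ × ℕ => a.1 < b.1 := ⟨fun _ _ hab hba => absurd hab hba.asymm⟩
  exact List.Perm.eq_of_pairwise' h₁ h₂ ((List.perm_ext_iff_of_nodup (hnodup h₁) (hnodup h₂)).2 h)

def invert (l : List (ℕ × ℕ)) : List (ℕ × ℕ) :=
  (l.map Prod.swap).mergeSort fun a b => a.1 ≤ b.1

lemma mem_invert {l : List (ℕ × ℕ)} {x : ℕ × ℕ} : x ∈ invert l ↔ x.swap ∈ l := by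
  rw [invert, List.mem_mergeSort, List.mem_map]
  exact ⟨fun ⟨y, hy, hyx⟩ => hyx ▸ by simpa using hy, fun hx => ⟨x.swap, hx, x.swap_swap⟩⟩

lemma length_invert (l : List (ℕ × ℕ)) : (invert l).length = l.length := by
  rw [invert, List.length_mergeSort, List.length_map]

lemma toFinset_invert (l : List (ℕ × ℕ)) : (invert l).toFinset = l.toFinset.image Prod.swap := by
  ext x
  simp only [List.mem_toFinset, mem_invert, Finset.mem_image]
  exact ⟨fun hx => ⟨x.swap, hx, x.swap_swap⟩, fun ⟨y, hy, hyx⟩ => hyx ▸ by simpa using hy⟩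

namespace IsBiword

variable {l : List (ℕ × ℕ)}

lemma isGrid (h : IsBiword l) : IsGrid l.toFinset := by
  have hfst : (l.map Prod.fst).Nodup := List.pairwise_map.2 (h.1.imp ne_of_lt)
  have hsnd : (l.map Prod.snd).Nodup := List.pairwise_map.2 h.2
  constructor <;> intro a ha b hb <;> rw [Finset.mem_coe, List.mem_toFinset] at ha hb
  · exact List.inj_on_of_nodup_map hfst ha hb
  · exact List.inj_on_of_nodup_map hsnd ha hb

lemma invert (h : IsBiword l) : IsBiword (invert l) := by
  have hle : (RobinsonSchensted.invert l).Pairwise fun a b => a.1 ≤ b.1 := by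
    rw [RobinsonSchensted.invert]
    simpa using List.pairwise_mergeSort (le := fun a b : ℕ × ℕ => a.1 ≤ b.1)
      (fun a b c hab hbc => by simp only [decide_eq_true_eq] at *; omega)
      (fun a b => by simp only [Bool.or_eq_true, decide_eq_true_eq]; omega) (l.map Prod.swap)
  have hperm : (RobinsonSchensted.invert l).Perm (l.map Prod.swap) := List.mergeSort_perm _ _
  have hfst : ((RobinsonSchensted.invert l).map Prod.fst).Nodup := by
    rw [(hperm.map _).nodup_iff, List.map_map]
    exact List.pairwise_map.2 h.2
  have hsnd : ((RobinsonSchensted.invert l).map Prod.snd).Nodup := by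
    rw [(hperm.map _).nodup_iff, List.map_map]
    exact List.pairwise_map.2 (h.1.imp ne_of_lt)
  exact ⟨(hle.and (List.pairwise_map.1 hfst)).imp fun hab => lt_of_le_of_ne hab.1 hab.2,
    List.pairwise_map.1 hsnd⟩

lemma firstRowSpec (h : IsBiword l) :
    FirstRowSpec l.toFinset ↑l.toFinset (firstRowPass l) := by
  suffices ∀ v, v <+: l →
      FirstRowSpec l.toFinset ↑v.toFinset (v.foldl RowState.step ⟨[], [], []⟩) from
    this l (List.prefix_refl l)
  intro v hv
  induction v using List.reverseRecOn with
  | nil => simpa using firstRowSpec_empty _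
  | append_singleton v e ih =>
    obtain ⟨t, rfl⟩ := hv
    have hsorted := h.1
    simp only [List.append_assoc, List.singleton_append, List.pairwise_append, List.pairwise_cons,
      List.mem_cons] at hsorted
    obtain ⟨-, ⟨heT, -⟩, hvT⟩ := hsorted
    have hu (g : ℕ × ℕ) :
        g ∈ (↑v.toFinset : Set (ℕ × ℕ)) ↔ g ∈ (v ++ [e] ++ t).toFinset ∧ g.1 < e.1 := by
      simp only [Finset.mem_coe, List.mem_toFinset, List.mem_append, List.mem_singleton]
      refine ⟨fun hg => ⟨Or.inl (Or.inl hg), hvT g hg e (Or.inl rfl)⟩, ?_⟩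
      rintro ⟨(hg | rfl) | hg, hge⟩
      · exact hg
      · exact absurd hge (lt_irrefl _)
      · exact absurd (heT g hg) hge.asymm
    have hσ := (ih ⟨[e] ++ t, by simp⟩).step h.isGrid (by simp) hu
    have hins : (↑(v ++ [e]).toFinset : Set (ℕ × ℕ)) = insert e ↑v.toFinset := by
      ext; simp
    rwa [List.foldl_append, List.foldl_cons, List.foldl_nil, hins]

lemma bumped (h : IsBiword l) : IsBiword (firstRowPass l).bumped := by
  have hI := h.firstRowSpec
  refine ⟨hI.bumped_sorted, hI.bumped_sorted.imp_of_mem fun ha hb hab hsnd => ?_⟩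
  obtain ⟨e, he, f, -, hef, rfl⟩ := (hI.mem_bumped _).1 ha
  obtain ⟨e', he', f', -, hef', rfl⟩ := (hI.mem_bumped _).1 hb
  obtain rfl : e = e' := h.isGrid.2 he he' hsnd
  obtain rfl : f = f' := hef.right_unique h.isGrid hef'
  exact lt_irrefl _ hab

end IsBiword

lemma firstRowPass_invert {l : List (ℕ × ℕ)} (h : IsBiword l) :
    (firstRowPass (invert l)).pRow = (firstRowPass l).qRow ∧
      (firstRowPass (invert l)).qRow = (firstRowPass l).pRow ∧
      (firstRowPass (invert l)).bumped = invert (firstRowPass l).bumped := by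
  have hI := h.firstRowSpec
  have hI' := h.invert.firstRowSpec
  rw [toFinset_invert] at hI'
  have hlen : (firstRowPass (invert l)).pRow.length = (firstRowPass l).pRow.length :=
    eq_of_forall_lt_iff fun j => by
      rw [hI'.lt_length_iff, hI.lt_length_iff, classSnds_image_swap, classSnds_nonempty_iff]
  refine ⟨List.ext_getElem (by rw [hlen, hI.length_qRow]) fun j hj hj' => ?_,
    List.ext_getElem (by rw [hI'.length_qRow, hlen]) fun j hj hj' => ?_,
    eq_of_pairwise_fst_lt hI'.bumped_sorted h.bumped.invert.1 fun x => ?_⟩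
  · have := hI'.isLeast_pRow j hj
    rw [classSnds_image_swap] at this
    exact this.unique (hI.isLeast_qRow j hj')
  · have := hI'.isLeast_qRow j hj
    rw [classFsts_image_swap] at this
    exact this.unique (hI.isLeast_pRow j hj')
  · rw [hI'.mem_bumped, bumpSet_image_swap h.isGrid, mem_invert, hI.mem_bumped,
      Set.image_swap_eq_preimage_swap, Set.mem_preimage]

theorem rsBiword_invert {l : List (ℕ × ℕ)} (h : IsBiword l) :
    rsBiword (invert l) = (rsBiword l).swap := by
  induction hn : l.length using Nat.strong_induction_on generalizing l with
  | _ n ih =>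
  rcases eq_or_ne l [] with rfl | hl
  · simp [invert, rsBiword]
  have hl' : invert l ≠ [] := by
    rwa [ne_eq, ← List.length_eq_zero_iff, length_invert, List.length_eq_zero_iff]
  obtain ⟨hp, hq, hb⟩ := firstRowPass_invert h
  have hrec := ih _ (hn ▸ length_bumped_firstRowPass_lt hl) h.bumped rfl
  rw [rsBiword_eq_toPair_firstRowPass hl, rsBiword_eq_toPair_firstRowPass hl', RowState.toPair,
    RowState.toPair, hp, hq, hb, hrec]
  rfl

def permBiword {n : ℕ} (w : Equiv.Perm (Fin n)) : List (ℕ × ℕ) :=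
  List.ofFn fun i => ((i : ℕ) + 1, (w i : ℕ) + 1)

lemma RSpair_permWord {n : ℕ} (w : Equiv.Perm (Fin n)) :
    RSpair (permWord w) = rsBiword (permBiword w) := by
  rw [RSpair_eq_rsBiword]
  congr 1
  apply List.ext_getElem <;> simp [permWord, permBiword]

lemma isBiword_permBiword {n : ℕ} (w : Equiv.Perm (Fin n)) : IsBiword (permBiword w) := by
  refine ⟨List.pairwise_ofFn.2 fun i j hij => ?_, List.pairwise_ofFn.2 fun i j hij => ?_⟩
  · simpa using hij
  · simpa [Fin.val_eq_val] using hij.ne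

lemma invert_permBiword {n : ℕ} (w : Equiv.Perm (Fin n)) : invert (permBiword w) = permBiword w⁻¹ :=
  eq_of_pairwise_fst_lt (isBiword_permBiword w).invert.1 (isBiword_permBiword w⁻¹).1 fun x => by
    simp only [mem_invert, permBiword, List.mem_ofFn]
    constructor
    · rintro ⟨i, hi⟩
      exact ⟨w i, by rw [← Prod.swap_swap x, ← hi]; simp⟩
    · rintro ⟨i, rfl⟩
      exact ⟨w⁻¹ i, by simp⟩

end RobinsonSchensted

open RobinsonSchensted in
/-- Symmetry theorem: if `w` corresponds to `(P, Q)` under Robinson–Schensted, then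
`w⁻¹` corresponds to `(Q, P)`. -/
theorem robinson_schensted_symmetry {n : ℕ} (w : Equiv.Perm (Fin n)) :
    RSP w⁻¹ = RSQ w ∧ RSQ w⁻¹ = RSP w := by
  have h := rsBiword_invert (isBiword_permBiword w)
  rw [invert_permBiword] at h
  simp only [RSP, RSQ, RSpair_permWord, h, Prod.fst_swap, Prod.snd_swap, and_self]
end

section
/- For w ∈ Sₙ and 1 ≤ i ≤ n−1, the simple transposition sᵢ is a right descent of w (i.e., l(w sᵢ) < l(w), equivalently w(i) > w(i+1)) if and only if i belongs to the tableau descent set of the recording tableau Q(w), i.e., i+1 lies strictly below and weakly to the left of i in Q(w). -/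
/-- The (0-indexed) row of the tableau `T` in which the entry `m` lies. -/
def rowOf (T : List (List ℕ)) (m : ℕ) : ℕ := T.findIdx (fun r => m ∈ r)

/-- The (0-indexed) column of the tableau `T` in which the entry `m` lies. -/
def colOf (T : List (List ℕ)) (m : ℕ) : ℕ :=
  (T.getD (rowOf T m) []).findIdx (fun y => y = m)

open List

namespace List

theorem getD_set_of_lt {α : Type*} {r : List α} {d : α} {i j : ℕ} (hj : j < r.length)
    (a : α) : (r.set i a).getD j d = if i = j then a else r.getD j d := by
  rw [getD_eq_getElem _ _ (by simpa using hj), getElem_set, getD_eq_getElem _ _ hj]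

theorem findIdx?_lt_eq_none {r : List ℕ} {x : ℕ} :
    r.findIdx? (fun y => x < y) = none ↔ ∀ y ∈ r, y ≤ x := by
  simp [findIdx?_eq_none_iff]

theorem findIdx?_lt_eq_some {r : List ℕ} {x i : ℕ} (h : r.findIdx? (fun y => x < y) = some i) :
    i < r.length ∧ x < r.getD i 0 ∧ ∀ j < i, r.getD j 0 ≤ x := by
  obtain ⟨hi, hx, hmin⟩ := findIdx?_eq_some_iff_getElem.1 h
  refine ⟨hi, by rw [getD_eq_getElem _ _ hi]; simpa using hx, fun j hj => ?_⟩
  rw [getD_eq_getElem _ _ (hj.trans hi)]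
  simpa using hmin j hj

theorem length_le_of_findIdx?_lt_eq_none {r : List ℕ} {x j : ℕ}
    (h : r.findIdx? (fun y => x < y) = none) (hx : j < r.length → x < r.getD j 0) :
    r.length ≤ j := by
  by_contra! hj
  have hle := findIdx?_lt_eq_none.1 h _ (getElem_mem hj)
  rw [← getD_eq_getElem _ 0] at hle
  exact absurd (hx hj) (not_lt.2 hle)

theorem le_of_findIdx?_lt_eq_some {r : List ℕ} {x i j : ℕ}
    (h : r.findIdx? (fun y => x < y) = some i) (hx : j < r.length → x < r.getD j 0) :
    i ≤ j := by
  obtain ⟨hi, -, hmin⟩ := findIdx?_lt_eq_some h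
  by_contra! hji
  exact absurd (hx (hji.trans hi)) (not_lt.2 (hmin j hji))

theorem exists_findIdx?_lt_eq_some_le {r : List ℕ} {x j : ℕ} (hj : j < r.length)
    (hx : x < r.getD j 0) : ∃ i, r.findIdx? (fun y => x < y) = some i ∧ i ≤ j := by
  cases h : r.findIdx? (fun y => x < y) with
  | none => exact absurd (length_le_of_findIdx?_lt_eq_none h fun _ => hx) (not_le.2 hj)
  | some i => exact ⟨i, rfl, le_of_findIdx?_lt_eq_some h fun _ => hx⟩

theorem getD_le_getD_of_pairwise {r : List ℕ} (hs : r.Pairwise (· ≤ ·)) {j j' : ℕ}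
    (hj : j ≤ j') (hj' : j' < r.length) : r.getD j 0 ≤ r.getD j' 0 := by
  rw [getD_eq_getElem _ _ (lt_of_le_of_lt hj hj'), getD_eq_getElem _ _ hj']
  rcases hj.lt_or_eq with hlt | rfl
  · exact pairwise_iff_getElem.1 hs _ _ _ _ hlt
  · rfl

theorem Pairwise.set_of_le {r : List ℕ} (hr : r.Pairwise (· ≤ ·)) {i x : ℕ}
    (hl : ∀ j < i, r.getD j 0 ≤ x) (hx : x ≤ r.getD i 0) :
    (r.set i x).Pairwise (· ≤ ·) := by
  rw [pairwise_iff_getElem]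
  intro a b ha hb hab
  rw [length_set] at ha hb
  rw [← getD_eq_getElem _ 0, ← getD_eq_getElem _ 0, getD_set_of_lt ha, getD_set_of_lt hb]
  split_ifs with hia hib hib
  · omega
  · exact hx.trans (getD_le_getD_of_pairwise hr (by omega) hb)
  · exact hl a (by omega)
  · exact getD_le_getD_of_pairwise hr hab.le hb

theorem take_append_getD_cons_getD_cons_drop {α : Type*} {l : List α} {i : ℕ} (d : α)
    (hi : i + 1 < l.length) :
    l.take i ++ l.getD i d :: l.getD (i + 1) d :: l.drop (i + 2) = l := by
  rw [getD_eq_getElem _ _ (by omega), getD_eq_getElem _ _ hi, ← drop_eq_getElem_cons hi,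
    ← drop_eq_getElem_cons, take_append_drop]

end List

/-- The (row, column) of the box that `rowInsert T x` adds to the shape of `T`. -/
def insertPos : List (List ℕ) → ℕ → ℕ × ℕ
  | [], _ => (0, 0)
  | r :: rs, x =>
    match r.findIdx? (fun y => x < y) with
    | none => (0, r.length)
    | some i => ((insertPos rs (r.getD i 0)).1 + 1, (insertPos rs (r.getD i 0)).2)

theorem insertPos_fst_le_length (T : List (List ℕ)) (x : ℕ) :
    (insertPos T x).1 ≤ T.length := by
  induction T generalizing x with
  | nil => simp [insertPos]
  | cons r rs ih =>
    cases h : r.findIdx? (fun y => x < y) with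
    | none => simp [insertPos, h]
    | some i => simpa [insertPos, h] using ih _

theorem insertPos_snd (T : List (List ℕ)) (x : ℕ) :
    (insertPos T x).2 = (T.getD (insertPos T x).1 []).length := by
  induction T generalizing x with
  | nil => simp [insertPos]
  | cons r rs ih =>
    cases h : r.findIdx? (fun y => x < y) with
    | none => simp [insertPos, h]
    | some i => simpa [insertPos, h] using ih _

theorem addBox_cons_zero (r : List ℕ) (rs : List (List ℕ)) (k : ℕ) :
    addBox (r :: rs) 0 k = (r ++ [k]) :: rs := by
  simp [addBox]

theorem addBox_cons_succ (r : List ℕ) (rs : List (List ℕ)) (R k : ℕ) :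
    addBox (r :: rs) (R + 1) k = r :: addBox rs R k := by
  unfold addBox
  split_ifs <;> simp_all

theorem shapeOf_addBox_congr {P Q : List (List ℕ)} (h : shapeOf Q = shapeOf P) (R k k' : ℕ) :
    shapeOf (addBox Q R k) = shapeOf (addBox P R k') := by
  induction Q generalizing P R with
  | nil =>
    cases P with
    | nil => simp [addBox, shapeOf]
    | cons => simp [shapeOf] at h
  | cons q qs ih =>
    cases P with
    | nil => simp [shapeOf] at h
    | cons p ps =>
    simp only [shapeOf, map_cons, cons.injEq] at h
    cases R with
    | zero => simp [addBox_cons_zero, shapeOf, h.1, h.2]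
    | succ R => simpa [addBox_cons_succ, shapeOf, h.1] using ih h.2 R

theorem shapeOf_rowInsert (T : List (List ℕ)) (x : ℕ) :
    shapeOf (rowInsert T x) = shapeOf (addBox T (insertPos T x).1 x) := by
  induction T generalizing x with
  | nil => simp [rowInsert, insertPos, addBox]
  | cons r rs ih =>
    cases h : r.findIdx? (fun y => x < y) with
    | none => simp [rowInsert, insertPos, h, addBox_cons_zero]
    | some i =>
      simp only [rowInsert, insertPos, h, addBox_cons_succ]
      change (r.set i x).length :: shapeOf _ = r.length :: shapeOf _
      rw [length_set, ih, shapeOf_addBox_congr rfl]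

def RowAbove (R r : List ℕ) : Prop :=
  r.length ≤ R.length ∧ ∀ j < r.length, R.getD j 0 < r.getD j 0

def IsSemistandard (T : List (List ℕ)) : Prop :=
  (∀ r ∈ T, r.Pairwise (· ≤ ·)) ∧ T.IsChain RowAbove

theorem rowAbove_nil (R : List ℕ) : RowAbove R [] := ⟨by simp, by simp⟩

theorem isSemistandard_nil : IsSemistandard [] := ⟨by simp, .nil⟩

theorem isSemistandard_cons {r : List ℕ} {rs : List (List ℕ)} :
    IsSemistandard (r :: rs) ↔
      r.Pairwise (· ≤ ·) ∧ RowAbove r (rs.getD 0 []) ∧ IsSemistandard rs := by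
  cases rs with
  | nil => simp [IsSemistandard, rowAbove_nil]
  | cons r' rs => simp [IsSemistandard, isChain_cons_cons, and_assoc, and_left_comm]

/-- If `y` fits into the first row at or before column `j`, so does every value bumped along its
insertion path; hence the new box lies in a column `≤ j`. -/
theorem insertPos_snd_le : ∀ {T : List (List ℕ)} {y j : ℕ}, IsSemistandard T →
    (j < (T.getD 0 []).length → y < (T.getD 0 []).getD j 0) → (insertPos T y).2 ≤ j
  | [], _, _, _, _ => by simp [insertPos]
  | r :: rs, y, j, hT, hj => by
    obtain ⟨-, hr, hrs⟩ := isSemistandard_cons.1 hT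
    simp only [getD_cons_zero] at hj
    cases h : r.findIdx? (fun z => y < z) with
    | none =>
      simp only [insertPos, h]
      exact length_le_of_findIdx?_lt_eq_none h hj
    | some i =>
      simp only [insertPos, h]
      exact (insertPos_snd_le hrs (hr.2 i)).trans (le_of_findIdx?_lt_eq_some h hj)

theorem rowAbove_head_rowInsert {R : List ℕ} {rs : List (List ℕ)} {y i : ℕ}
    (hR : RowAbove R (rs.getD 0 [])) (hi : i < R.length) (hup : ∀ j ≤ i, R.getD j 0 < y)
    (hdown : i < (rs.getD 0 []).length → y < (rs.getD 0 []).getD i 0) :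
    RowAbove R ((rowInsert rs y).getD 0 []) := by
  cases rs with
  | nil =>
    change RowAbove R [y]
    refine ⟨by simp; omega, fun j hj => ?_⟩
    obtain rfl : j = 0 := by simpa using hj
    simpa using hup 0 (Nat.zero_le _)
  | cons r rs =>
    simp only [getD_cons_zero] at hR hdown
    cases h : r.findIdx? (fun z => y < z) with
    | none =>
      have hri : r.length ≤ i := length_le_of_findIdx?_lt_eq_none h hdown
      simp only [rowInsert, h, getD_cons_zero]
      refine ⟨by simp; omega, fun j hj => ?_⟩
      rcases lt_or_ge j r.length with hjr | hjr
      · rw [getD_append _ _ _ _ hjr]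
        exact hR.2 j hjr
      · obtain rfl : j = r.length := by simp at hj; omega
        simpa using hup _ hri
    | some i' =>
      have hi'i : i' ≤ i := le_of_findIdx?_lt_eq_some h hdown
      simp only [rowInsert, h, getD_cons_zero]
      refine ⟨by rw [length_set]; exact hR.1, fun j hj => ?_⟩
      rw [length_set] at hj
      rw [getD_set_of_lt hj]
      split_ifs with hij
      · exact hup j (by omega)
      · exact hR.2 j hj

theorem IsSemistandard.rowInsert : ∀ {T : List (List ℕ)}, IsSemistandard T → ∀ x,
    IsSemistandard (rowInsert T x)
  | [], _, x => by simp [_root_.rowInsert, IsSemistandard]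
  | r :: rs, hT, x => by
    obtain ⟨hsort, hr, hrs⟩ := isSemistandard_cons.1 hT
    cases h : r.findIdx? (fun y => x < y) with
    | none =>
      have hle := findIdx?_lt_eq_none.1 h
      simp only [_root_.rowInsert, h]
      refine isSemistandard_cons.2
        ⟨?_, ⟨by simpa using hr.1.trans (Nat.le_succ _), fun j hj => ?_⟩, hrs⟩
      · simpa [pairwise_append, hsort] using hle
      · rw [getD_append _ _ _ _ (lt_of_lt_of_le hj hr.1)]
        exact hr.2 j hj
    | some i =>
      obtain ⟨hi, hxi, hlow⟩ := findIdx?_lt_eq_some h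
      simp only [_root_.rowInsert, h]
      refine isSemistandard_cons.2 ⟨hsort.set_of_le hlow hxi.le, ?_, hrs.rowInsert _⟩
      refine rowAbove_head_rowInsert ⟨by rw [length_set]; exact hr.1, fun j hj => ?_⟩
        (by rwa [length_set]) (fun j hj => ?_) (hr.2 i)
      · rw [getD_set_of_lt (lt_of_lt_of_le hj hr.1)]
        split_ifs with hij
        · subst hij; exact hxi.trans (hr.2 _ hj)
        · exact hr.2 j hj
      · rw [getD_set_of_lt (by omega)]
        split_ifs with hij
        · exact hxi
        · exact (hlow j (by omega)).trans_lt hxi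

/-- Schensted's row bumping lemma, case `a ≤ b`. -/
theorem insertPos_rowInsert_of_le : ∀ {T : List (List ℕ)} {a b : ℕ}, IsSemistandard T →
    a ≤ b → (insertPos (rowInsert T a) b).1 ≤ (insertPos T a).1 ∧
        (insertPos T a).2 < (insertPos (rowInsert T a) b).2
  | [], a, b, _, hab => by
    simp [rowInsert, insertPos, not_lt.2 hab]
  | r :: rs, a, b, hT, hab => by
    obtain ⟨hsort, hr, hrs⟩ := isSemistandard_cons.1 hT
    cases ha : r.findIdx? (fun y => a < y) with
    | none =>
      have hb : (r ++ [a]).findIdx? (fun y => b < y) = none := by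
        simpa [findIdx?_lt_eq_none, hab] using
          fun y hy => (findIdx?_lt_eq_none.1 ha y hy).trans hab
      simp [rowInsert, insertPos, ha, hb]
    | some i =>
      obtain ⟨hi, hai, hlow⟩ := findIdx?_lt_eq_some ha
      cases hb : (r.set i a).findIdx? (fun z => b < z) with
      | none =>
        have hcol : (insertPos rs (r.getD i 0)).2 ≤ i := insertPos_snd_le hrs (hr.2 i)
        simp only [rowInsert, insertPos, ha, hb, length_set]
        exact ⟨Nat.zero_le _, by omega⟩
      | some i' =>
        obtain ⟨hi', hbi', -⟩ := findIdx?_lt_eq_some hb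
        rw [length_set] at hi'
        rw [getD_set_of_lt hi'] at hbi'
        have hii' : i < i' := by
          by_contra! hle
          split_ifs at hbi' with heq
          · omega
          · exact absurd (hlow i' (by omega)) (by omega)
        have IH := insertPos_rowInsert_of_le hrs (getD_le_getD_of_pairwise hsort hii'.le hi')
        simp only [rowInsert, insertPos, ha, hb, getD_set_of_lt hi', if_neg hii'.ne]
        exact ⟨Nat.succ_le_succ IH.1, IH.2⟩

/-- Schensted's row bumping lemma, case `b < a`. -/
theorem insertPos_rowInsert_of_lt : ∀ {T : List (List ℕ)} {a b : ℕ}, IsSemistandard T →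
    b < a → (insertPos T a).1 < (insertPos (rowInsert T a) b).1 ∧
        (insertPos (rowInsert T a) b).2 ≤ (insertPos T a).2
  | [], a, b, _, hab => by
    simp [rowInsert, insertPos, hab]
  | r :: rs, a, b, hT, hab => by
    obtain ⟨hsort, hr, hrs⟩ := isSemistandard_cons.1 hT
    cases ha : r.findIdx? (fun y => a < y) with
    | none =>
      obtain ⟨i', hb, hi'⟩ := exists_findIdx?_lt_eq_some_le (r := r ++ [a]) (j := r.length)
        (by simp) (by simpa using hab)
      have hcol : (insertPos rs ((r ++ [a]).getD i' 0)).2 ≤ i' := by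
        refine insertPos_snd_le hrs fun hlt => ?_
        rw [getD_append _ _ _ _ (lt_of_lt_of_le hlt hr.1)]
        exact hr.2 i' hlt
      simp only [rowInsert, insertPos, ha, hb]
      exact ⟨Nat.zero_lt_succ _, hcol.trans hi'⟩
    | some i =>
      obtain ⟨hi, hai, hlow⟩ := findIdx?_lt_eq_some ha
      obtain ⟨i', hb, hi'i⟩ := exists_findIdx?_lt_eq_some_le (r := r.set i a) (j := i)
        (by simpa using hi) (by rwa [getD_set_of_lt hi, if_pos rfl])
      rcases hi'i.lt_or_eq with hlt | rfl
      · have IH := insertPos_rowInsert_of_lt hrs ((hlow i' hlt).trans_lt hai)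
        simp only [rowInsert, insertPos, ha, hb, getD_set_of_lt (hlt.trans hi), if_neg hlt.ne']
        exact ⟨Nat.succ_lt_succ IH.1, IH.2⟩
      · have IH := insertPos_rowInsert_of_lt hrs hai
        simp only [rowInsert, insertPos, ha, hb, getD_set_of_lt hi]
        exact ⟨Nat.succ_lt_succ IH.1, IH.2⟩

theorem getD_shapeOf (T : List (List ℕ)) (j : ℕ) :
    (shapeOf T).getD j 0 = (T.getD j []).length := by
  rw [shapeOf, getD_eq_getElem?_getD, getD_eq_getElem?_getD, getElem?_map]
  cases T[j]? <;> rfl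

theorem getD_addBox {Q : List (List ℕ)} {R : ℕ} (hR : R ≤ Q.length) (k j : ℕ) :
    (addBox Q R k).getD j [] = if j = R then Q.getD R [] ++ [k] else Q.getD j [] := by
  induction Q generalizing R j with
  | nil =>
    obtain rfl : R = 0 := by simpa using hR
    cases j <;> simp [addBox]
  | cons q qs ih =>
    cases R with
    | zero => cases j <;> simp [addBox_cons_zero]
    | succ R =>
      cases j with
      | zero => simp [addBox_cons_succ]
      | succ j =>
        simp only [addBox_cons_succ, getD_cons_succ, ih (by simpa using hR), add_left_inj]

theorem mem_getD_addBox {Q : List (List ℕ)} {R : ℕ} (hR : R ≤ Q.length) {k j m : ℕ} :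
    m ∈ (addBox Q R k).getD j [] ↔ m ∈ Q.getD j [] ∨ j = R ∧ m = k := by
  rw [getD_addBox hR]
  split_ifs with hj <;> simp [hj]

theorem mem_flatten_iff_exists_getD {T : List (List ℕ)} {m : ℕ} :
    m ∈ T.flatten ↔ ∃ j, m ∈ T.getD j [] := by
  simp only [mem_flatten, getD_eq_getElem?_getD]
  constructor
  · rintro ⟨l, hl, hm⟩
    obtain ⟨j, hj, rfl⟩ := getElem_of_mem hl
    exact ⟨j, by simpa [hj] using hm⟩
  · rintro ⟨j, hm⟩
    cases h : T[j]? with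
    | none => simp [h] at hm
    | some l => exact ⟨l, mem_of_getElem? h, by simpa [h] using hm⟩

theorem mem_flatten_addBox {Q : List (List ℕ)} {R : ℕ} (hR : R ≤ Q.length) {k m : ℕ} :
    m ∈ (addBox Q R k).flatten ↔ m ∈ Q.flatten ∨ m = k := by
  simp only [mem_flatten_iff_exists_getD, mem_getD_addBox hR]
  constructor
  · rintro ⟨j, hj | ⟨-, rfl⟩⟩
    exacts [Or.inl ⟨j, hj⟩, Or.inr rfl]
  · rintro (⟨j, hj⟩ | rfl)
    exacts [⟨j, Or.inl hj⟩, ⟨R, Or.inr ⟨rfl, rfl⟩⟩]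

theorem rowOf_eq_of_mem {T : List (List ℕ)} {m r : ℕ} (hm : m ∈ T.getD r [])
    (hmin : ∀ j < r, m ∉ T.getD j []) : rowOf T m = r := by
  have hr : r < T.length := by
    by_contra! h
    rw [getD_eq_default _ _ h] at hm
    simp at hm
  rw [getD_eq_getElem _ _ hr] at hm
  rw [rowOf, findIdx_eq hr]
  refine ⟨by simpa using hm, fun j hj => ?_⟩
  have := hmin j hj
  rw [getD_eq_getElem _ _ (hj.trans hr)] at this
  simpa using this

theorem mem_getD_rowOf {T : List (List ℕ)} {m : ℕ} (hm : m ∈ T.flatten) :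
    m ∈ T.getD (rowOf T m) [] ∧ ∀ j < rowOf T m, m ∉ T.getD j [] := by
  have hlt : rowOf T m < T.length :=
    findIdx_lt_length_of_exists (by simpa using (mem_flatten.1 hm))
  refine ⟨?_, fun j hj => ?_⟩
  · rw [getD_eq_getElem _ _ hlt]
    exact of_decide_eq_true (findIdx_getElem (w := hlt))
  · rw [getD_eq_getElem _ _ (hj.trans hlt)]
    simpa using not_of_lt_findIdx hj

def boxPos (T : List (List ℕ)) (m : ℕ) : ℕ × ℕ := (rowOf T m, colOf T m)

theorem boxPos_addBox_of_mem {Q : List (List ℕ)} {R k m : ℕ} (hR : R ≤ Q.length)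
    (hk : k ∉ Q.flatten) (hm : m ∈ Q.flatten) :
    boxPos (addBox Q R k) m = boxPos Q m := by
  have hmk : m ≠ k := by rintro rfl; exact hk hm
  obtain ⟨hrow, hmin⟩ := mem_getD_rowOf hm
  have hrow' : rowOf (addBox Q R k) m = rowOf Q m :=
    rowOf_eq_of_mem ((mem_getD_addBox hR).2 (Or.inl hrow))
      fun j hj => by
        rw [mem_getD_addBox hR]
        exact fun h => h.elim (hmin j hj) fun h => hmk h.2
  simp only [boxPos, colOf, hrow', getD_addBox hR]
  split_ifs with h
  · rw [h] at hrow ⊢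
    rw [findIdx_append, if_pos (findIdx_lt_length_of_exists ⟨m, hrow, by simp⟩)]
  · rfl

theorem boxPos_addBox_self {Q : List (List ℕ)} {R k : ℕ} (hR : R ≤ Q.length)
    (hk : k ∉ Q.flatten) : boxPos (addBox Q R k) k = (R, (Q.getD R []).length) := by
  have hkR : ∀ j, k ∉ Q.getD j [] := fun j hj => hk (mem_flatten_iff_exists_getD.2 ⟨j, hj⟩)
  have hrow : rowOf (addBox Q R k) k = R :=
    rowOf_eq_of_mem ((mem_getD_addBox hR).2 (Or.inr ⟨rfl, rfl⟩))
      fun j hj => by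
        rw [mem_getD_addBox hR]
        exact fun h => h.elim (hkR j) fun h => hj.ne h.1
  simp only [boxPos, colOf, hrow, getD_addBox hR, if_true, findIdx_append]
  rw [if_neg (by simpa [findIdx_lt_length] using hkR R)]
  simp

theorem findIdx_shapeOf_ne_rowInsert (P : List (List ℕ)) (x : ℕ) :
    (range (rowInsert P x).length).findIdx
        (fun j => (shapeOf P).getD j 0 ≠ (shapeOf (rowInsert P x)).getD j 0) =
      (insertPos P x).1 := by
  have hR := insertPos_fst_le_length P x
  have hshape : ∀ j, (shapeOf (rowInsert P x)).getD j 0 =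
      (P.getD j []).length + if j = (insertPos P x).1 then 1 else 0 := by
    intro j
    rw [shapeOf_rowInsert, getD_shapeOf, getD_addBox hR]
    split_ifs with hj <;> simp [hj]
  have hlt : (insertPos P x).1 < (rowInsert P x).length := by
    by_contra! h
    have := hshape (insertPos P x).1
    rw [getD_shapeOf, getD_eq_default _ _ h] at this
    simp at this
  rw [findIdx_eq (by simpa using hlt)]
  simp only [getElem_range, hshape, getD_shapeOf]
  simp +contextual [Nat.ne_of_lt]

theorem RSpair_append_singleton (w : List ℕ) (x : ℕ) :
    RSpair (w ++ [x]) = (rowInsert (RSpair w).1 x,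
      addBox (RSpair w).2 (insertPos (RSpair w).1 x).1 (w.length + 1)) := by
  rw [RSpair, zipIdx_append, map_append, foldl_append]
  simp only [zero_add, zipIdx_singleton, map_cons, map_nil, foldl_cons, foldl_nil,
    Prod.swap_prod_mk]
  rw [findIdx_shapeOf_ne_rowInsert]
  rfl

theorem isSemistandard_RSpair_fst (w : List ℕ) : IsSemistandard (RSpair w).1 := by
  induction w using reverseRecOn with
  | nil => exact isSemistandard_nil
  | append_singleton w x ih =>
    rw [RSpair_append_singleton]
    exact ih.rowInsert x

theorem shapeOf_RSpair_snd (w : List ℕ) : shapeOf (RSpair w).2 = shapeOf (RSpair w).1 := by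
  induction w using reverseRecOn with
  | nil => rfl
  | append_singleton w x ih =>
    rw [RSpair_append_singleton, shapeOf_rowInsert]
    exact shapeOf_addBox_congr ih _ _ _

theorem insertPos_fst_le_length_RSpair_snd (w : List ℕ) (x : ℕ) :
    (insertPos (RSpair w).1 x).1 ≤ (RSpair w).2.length := by
  have := congrArg length (shapeOf_RSpair_snd w)
  simp only [shapeOf, length_map] at this
  exact this ▸ insertPos_fst_le_length _ x

theorem mem_flatten_RSpair_snd (w : List ℕ) {m : ℕ} :
    m ∈ (RSpair w).2.flatten ↔ 1 ≤ m ∧ m ≤ w.length := by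
  induction w using reverseRecOn with
  | nil => simp [RSpair]; omega
  | append_singleton w x ih =>
    rw [RSpair_append_singleton, mem_flatten_addBox (insertPos_fst_le_length_RSpair_snd w x), ih]
    simp only [length_append, length_singleton]
    omega

theorem boxPos_RSpair_snd_append_singleton (w : List ℕ) (x : ℕ) :
    boxPos (RSpair (w ++ [x])).2 (w.length + 1) = insertPos (RSpair w).1 x := by
  rw [RSpair_append_singleton, boxPos_addBox_self (insertPos_fst_le_length_RSpair_snd w x)
    (by rw [mem_flatten_RSpair_snd]; omega), ← getD_shapeOf, shapeOf_RSpair_snd, getD_shapeOf,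
    ← insertPos_snd]

theorem boxPos_RSpair_snd_append {w : List ℕ} {m : ℕ} (hm₁ : 1 ≤ m) (hm : m ≤ w.length)
    (v : List ℕ) : boxPos (RSpair (w ++ v)).2 m = boxPos (RSpair w).2 m := by
  induction v using reverseRecOn with
  | nil => simp
  | append_singleton v y ih =>
    rw [← append_assoc, RSpair_append_singleton,
      boxPos_addBox_of_mem (insertPos_fst_le_length_RSpair_snd _ y)
        (by rw [mem_flatten_RSpair_snd]; simp)
        ((mem_flatten_RSpair_snd _).2 ⟨hm₁, by simp; omega⟩), ih]

theorem lt_iff_rowOf_lt_and_colOf_le_RSpair_snd (w v : List ℕ) (a b : ℕ) :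
    b < a ↔
      rowOf (RSpair (w ++ a :: b :: v)).2 (w.length + 1) <
          rowOf (RSpair (w ++ a :: b :: v)).2 (w.length + 2) ∧
        colOf (RSpair (w ++ a :: b :: v)).2 (w.length + 2) ≤
          colOf (RSpair (w ++ a :: b :: v)).2 (w.length + 1) := by
  have hposa :
      boxPos (RSpair (w ++ a :: b :: v)).2 (w.length + 1) = insertPos (RSpair w).1 a := by
    rw [show w ++ a :: b :: v = w ++ [a] ++ b :: v by simp,
      boxPos_RSpair_snd_append (by omega) (by simp), boxPos_RSpair_snd_append_singleton]
  have hposb : boxPos (RSpair (w ++ a :: b :: v)).2 (w.length + 2) =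
      insertPos (rowInsert (RSpair w).1 a) b := by
    rw [show w ++ a :: b :: v = w ++ [a] ++ [b] ++ v by simp,
      boxPos_RSpair_snd_append (by omega) (by simp),
      show w.length + 2 = (w ++ [a]).length + 1 by simp, boxPos_RSpair_snd_append_singleton,
      RSpair_append_singleton]
  change b < a ↔ (boxPos _ _).1 < (boxPos _ _).1 ∧ (boxPos _ _).2 ≤ (boxPos _ _).2
  rw [hposa, hposb]
  have hP := isSemistandard_RSpair_fst w
  refine ⟨insertPos_rowInsert_of_lt hP, fun ⟨hrow, _⟩ => ?_⟩
  by_contra! hab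
  exact absurd (insertPos_rowInsert_of_le hP hab).1 (by omega)

/-- For `w ∈ Sₙ` and `1 ≤ i ≤ n − 1`, the simple transposition `sᵢ` is a right
descent of `w` (i.e. `w(i) > w(i+1)`) if and only if `i` lies in the tableau
descent set of the recording tableau `Q(w)`, i.e. `i+1` lies strictly below and
weakly to the left of `i` in `Q(w)`. -/
theorem right_descent_iff_tableau_descent
    {n : ℕ} (w : Equiv.Perm (Fin n)) (i : ℕ) (h1 : 1 ≤ i) (h2 : i < n) :
    (permWord w).getD i 0 < (permWord w).getD (i - 1) 0 ↔
      (rowOf (RSQ w) i < rowOf (RSQ w) (i + 1) ∧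
        colOf (RSQ w) (i + 1) ≤ colOf (RSQ w) i) := by
  obtain ⟨j, rfl⟩ : ∃ j, i = j + 1 := ⟨i - 1, by omega⟩
  have hlen : (permWord w).length = n := by simp [permWord]
  have key := lt_iff_rowOf_lt_and_colOf_le_RSpair_snd ((permWord w).take j)
    ((permWord w).drop (j + 2)) ((permWord w).getD j 0) ((permWord w).getD (j + 1) 0)
  rwa [take_append_getD_cons_getD_cons_drop 0 (by omega), length_take_of_le (by omega)] at key
end
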